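/- arXiv:gr-qc/0005005 — 9 statements merged into one kernel-verified Lean document; each statement's English description precedes it below -/
import Mathlib

section
/- For every r ∈ (a, b), the derivative of h satisfies h'(r) = 2·r·w'(r)²·(Φ(r) + 2·A(r)·w'(r)² − 2·A(r)); equivalently, h'(r) = 2·r²·w'(r)²·k(r). -/
/-- Equation (h'): for a solution of the static spherically symmetric
Einstein–SU(2) Yang–Mills equations with cosmological constant `Λ` on `(a, b)`,
with `h(r) = (1 - w(r)²)² - 2 r² A(r) w'(r)²`,
`Φ(r) = 1 - A(r) - (1 - w(r)²)²/r² - Λ r²` and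
`k(r) = (Φ(r) + 2 A(r) w'(r)² - 2 A(r))/r`, one has
`h'(r) = 2 r w'(r)² (Φ(r) + 2 A(r) w'(r)² - 2 A(r)) = 2 r² w'(r)² k(r)`. -/
theorem h_derivative_identity
    (Λ a b : ℝ) (hΛ : 0 < Λ) (ha : 0 < a) (hab : a < b)
    (A w : ℝ → ℝ)
    (hA : ∀ r ∈ Set.Ioo a b, DifferentiableAt ℝ A r)
    (hw : ∀ r ∈ Set.Ioo a b, DifferentiableAt ℝ w r)
    (hw' : ∀ r ∈ Set.Ioo a b, DifferentiableAt ℝ (deriv w) r)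
    (hE1 : ∀ r ∈ Set.Ioo a b,
      r * deriv A r + 2 * A r * (deriv w r) ^ 2
        = 1 - A r - (1 - (w r) ^ 2) ^ 2 / r ^ 2 - Λ * r ^ 2)
    (hE2 : ∀ r ∈ Set.Ioo a b,
      r ^ 2 * A r * deriv (deriv w) r
        + r * (1 - A r - (1 - (w r) ^ 2) ^ 2 / r ^ 2 - Λ * r ^ 2) * deriv w r
        + w r * (1 - (w r) ^ 2) = 0) :
    ∀ r ∈ Set.Ioo a b,
      deriv (fun s => (1 - (w s) ^ 2) ^ 2 - 2 * s ^ 2 * A s * (deriv w s) ^ 2) r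
        = 2 * r * (deriv w r) ^ 2
          * ((1 - A r - (1 - (w r) ^ 2) ^ 2 / r ^ 2 - Λ * r ^ 2)
              + 2 * A r * (deriv w r) ^ 2 - 2 * A r)
      ∧ deriv (fun s => (1 - (w s) ^ 2) ^ 2 - 2 * s ^ 2 * A s * (deriv w s) ^ 2) r
        = 2 * r ^ 2 * (deriv w r) ^ 2
          * (((1 - A r - (1 - (w r) ^ 2) ^ 2 / r ^ 2 - Λ * r ^ 2)
                + 2 * A r * (deriv w r) ^ 2 - 2 * A r) / r) := by
  intro r hr
  have hrpos : (0:ℝ) < r := lt_trans ha hr.1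
  have hrne : r ≠ 0 := ne_of_gt hrpos
  have hdw : HasDerivAt w (deriv w r) r := (hw r hr).hasDerivAt
  have hdA : HasDerivAt A (deriv A r) r := (hA r hr).hasDerivAt
  have hdw' : HasDerivAt (deriv w) (deriv (deriv w) r) r := (hw' r hr).hasDerivAt
  have h1 : HasDerivAt (fun s => (1 - (w s) ^ 2) ^ 2)
      (2 * (1 - (w r) ^ 2) ^ 1 * (0 - 2 * (w r) ^ 1 * deriv w r)) r := by
    exact (((hasDerivAt_const r (1:ℝ)).sub (hdw.pow 2)).pow 2)
  have h2 : HasDerivAt (fun s => 2 * s ^ 2 * A s * (deriv w s) ^ 2)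
      ((2 * (2 * r ^ 1 * 1) * A r + 2 * r ^ 2 * deriv A r) * (deriv w r) ^ 2
        + 2 * r ^ 2 * A r * (2 * (deriv w r) ^ 1 * deriv (deriv w) r)) r := by
    have ht : HasDerivAt (fun s : ℝ => 2 * s ^ 2) (2 * (2 * r ^ 1 * 1)) r :=
      (hasDerivAt_id r).pow 2 |>.const_mul 2
    exact (ht.mul hdA).mul (hdw'.pow 2)
  have hD : deriv (fun s => (1 - (w s) ^ 2) ^ 2 - 2 * s ^ 2 * A s * (deriv w s) ^ 2) r
      = 2 * (1 - (w r) ^ 2) ^ 1 * (0 - 2 * (w r) ^ 1 * deriv w r)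
        - ((2 * (2 * r ^ 1 * 1) * A r + 2 * r ^ 2 * deriv A r) * (deriv w r) ^ 2
          + 2 * r ^ 2 * A r * (2 * (deriv w r) ^ 1 * deriv (deriv w) r)) :=
    (h1.sub h2).deriv
  have e1 := hE1 r hr
  have e2 := hE2 r hr
  have main : deriv (fun s => (1 - (w s) ^ 2) ^ 2 - 2 * s ^ 2 * A s * (deriv w s) ^ 2) r
      = 2 * r * (deriv w r) ^ 2
        * ((1 - A r - (1 - (w r) ^ 2) ^ 2 / r ^ 2 - Λ * r ^ 2)
            + 2 * A r * (deriv w r) ^ 2 - 2 * A r) := by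
    rw [hD]
    linear_combination (-2 * r * (deriv w r) ^ 2) * e1 + (-4 * deriv w r) * e2
  refine ⟨main, ?_⟩
  rw [main]
  field_simp
end

section
/- For every r ∈ (a, b), the function k satisfies the differential identity r²·k'(r) + 2·r·(w'(r)² + 1)·k(r) + 2·p(r) = 0. -/
/-- Equation (keq): for a solution of the static spherically symmetric
Einstein–SU(2) Yang–Mills equations with cosmological constant `Λ` on `(a, b)`,
with `Φ(r) = 1 - A(r) - (1 - w(r)²)²/r² - Λ r²`,
`k(r) = (Φ(r) + 2 A(r) w'(r)² - 2 A(r))/r`, and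
`p(r) = 1 - 2 (1 - w(r)²)²/r² - 2 A(r) w'(r)²`, one has
`r² k'(r) + 2 r (w'(r)² + 1) k(r) + 2 p(r) = 0`. -/
theorem k_derivative_identity
    (Λ a b : ℝ) (hΛ : 0 < Λ) (ha : 0 < a) (hab : a < b)
    (A w : ℝ → ℝ)
    (hA : ∀ r ∈ Set.Ioo a b, DifferentiableAt ℝ A r)
    (hw : ∀ r ∈ Set.Ioo a b, DifferentiableAt ℝ w r)
    (hw' : ∀ r ∈ Set.Ioo a b, DifferentiableAt ℝ (deriv w) r)
    (hE1 : ∀ r ∈ Set.Ioo a b,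
      r * deriv A r + 2 * A r * (deriv w r) ^ 2
        = 1 - A r - (1 - (w r) ^ 2) ^ 2 / r ^ 2 - Λ * r ^ 2)
    (hE2 : ∀ r ∈ Set.Ioo a b,
      r ^ 2 * A r * deriv (deriv w) r
        + r * (1 - A r - (1 - (w r) ^ 2) ^ 2 / r ^ 2 - Λ * r ^ 2) * deriv w r
        + w r * (1 - (w r) ^ 2) = 0) :
    ∀ r ∈ Set.Ioo a b,
      r ^ 2 * deriv (fun s =>
          ((1 - A s - (1 - (w s) ^ 2) ^ 2 / s ^ 2 - Λ * s ^ 2)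
            + 2 * A s * (deriv w s) ^ 2 - 2 * A s) / s) r
        + 2 * r * ((deriv w r) ^ 2 + 1)
          * (((1 - A r - (1 - (w r) ^ 2) ^ 2 / r ^ 2 - Λ * r ^ 2)
              + 2 * A r * (deriv w r) ^ 2 - 2 * A r) / r)
        + 2 * (1 - 2 * (1 - (w r) ^ 2) ^ 2 / r ^ 2 - 2 * A r * (deriv w r) ^ 2)
        = 0 := by
  intro r hr
  obtain ⟨har, hrb⟩ := hr
  have hrpos : (0:ℝ) < r := ha.trans har
  have hr0 : r ≠ 0 := ne_of_gt hrpos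
  have hAd : HasDerivAt A (deriv A r) r := (hA r ⟨har, hrb⟩).hasDerivAt
  have hwd : HasDerivAt w (deriv w r) r := (hw r ⟨har, hrb⟩).hasDerivAt
  have hw'd : HasDerivAt (deriv w) (deriv (deriv w) r) r := (hw' r ⟨har, hrb⟩).hasDerivAt
  have hu : HasDerivAt (fun s => (1 - (w s) ^ 2) ^ 2)
      (2 * (1 - (w r) ^ 2) ^ 1 * (0 - 2 * (w r) ^ 1 * deriv w r)) r :=
    ((hasDerivAt_const r 1).sub (hwd.pow 2)).pow 2
  have hs2 : HasDerivAt (fun s : ℝ => s ^ 2) (2 * r ^ 1 * 1) r := (hasDerivAt_id r).pow 2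
  have hq : HasDerivAt (fun s => (1 - (w s) ^ 2) ^ 2 / s ^ 2)
      ((2 * (1 - (w r) ^ 2) ^ 1 * (0 - 2 * (w r) ^ 1 * deriv w r) * r ^ 2
        - (1 - (w r) ^ 2) ^ 2 * (2 * r ^ 1 * 1)) / (r ^ 2) ^ 2) r :=
    hu.div hs2 (pow_ne_zero 2 hr0)
  have hw1sq : HasDerivAt (fun s => (deriv w s) ^ 2)
      (2 * (deriv w r) ^ 1 * deriv (deriv w) r) r := hw'd.pow 2
  have hAw : HasDerivAt (fun s => 2 * A s * (deriv w s) ^ 2)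
      (2 * deriv A r * (deriv w r) ^ 2
        + 2 * A r * (2 * (deriv w r) ^ 1 * deriv (deriv w) r)) r :=
    ((hAd.const_mul 2).mul hw1sq)
  have hf : HasDerivAt (fun s =>
      (1 - A s - (1 - (w s) ^ 2) ^ 2 / s ^ 2 - Λ * s ^ 2)
        + 2 * A s * (deriv w s) ^ 2 - 2 * A s)
      ((0 - deriv A r
        - (2 * (1 - (w r) ^ 2) ^ 1 * (0 - 2 * (w r) ^ 1 * deriv w r) * r ^ 2
            - (1 - (w r) ^ 2) ^ 2 * (2 * r ^ 1 * 1)) / (r ^ 2) ^ 2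
        - Λ * (2 * r ^ 1 * 1))
        + (2 * deriv A r * (deriv w r) ^ 2
            + 2 * A r * (2 * (deriv w r) ^ 1 * deriv (deriv w) r))
        - 2 * deriv A r) r :=
    ((((hasDerivAt_const r 1).sub hAd).sub hq).sub (hs2.const_mul Λ)).add hAw |>.sub (hAd.const_mul 2)
  have hk := hf.div (hasDerivAt_id r) hr0
  simp only [Pi.div_def, id_eq] at hk
  rw [hk.deriv]
  have h1 := hE1 r ⟨har, hrb⟩
  have h2 := hE2 r ⟨har, hrb⟩
  field_simp at h1 h2 ⊢
  linear_combination (2 * (deriv w r) ^ 2 - 3) * h1 + (4 * deriv w r) * h2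
end

section
/- For every natural number β ≥ 1 and every r ∈ (a, b), the function A·(w')^β satisfies r²·(A·(w')^β)'(r) + r·w'(r)^β·((β − 1)·Φ(r) + 2·A(r)·w'(r)²) + β·w(r)·w'(r)^(β−1)·(1 − w(r)²) = 0. -/
/-- Equation (Aw'beta): for a solution of the static spherically symmetric
Einstein–SU(2) Yang–Mills equations with cosmological constant `Λ` on `(a, b)`,
with `Φ(r) = 1 - A(r) - (1 - w(r)²)²/r² - Λ r²`, for every natural `β ≥ 1`:
`r² (A (w')^β)'(r) + r w'(r)^β ((β - 1) Φ(r) + 2 A(r) w'(r)²)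
  + β w(r) w'(r)^(β-1) (1 - w(r)²) = 0`. -/
theorem A_wprime_pow_identity
    (Λ a b : ℝ) (hΛ : 0 < Λ) (ha : 0 < a) (hab : a < b)
    (A w : ℝ → ℝ)
    (hA : ∀ r ∈ Set.Ioo a b, DifferentiableAt ℝ A r)
    (hw : ∀ r ∈ Set.Ioo a b, DifferentiableAt ℝ w r)
    (hw' : ∀ r ∈ Set.Ioo a b, DifferentiableAt ℝ (deriv w) r)
    (hE1 : ∀ r ∈ Set.Ioo a b,
      r * deriv A r + 2 * A r * (deriv w r) ^ 2
        = 1 - A r - (1 - (w r) ^ 2) ^ 2 / r ^ 2 - Λ * r ^ 2)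
    (hE2 : ∀ r ∈ Set.Ioo a b,
      r ^ 2 * A r * deriv (deriv w) r
        + r * (1 - A r - (1 - (w r) ^ 2) ^ 2 / r ^ 2 - Λ * r ^ 2) * deriv w r
        + w r * (1 - (w r) ^ 2) = 0) :
    ∀ β : ℕ, 1 ≤ β → ∀ r ∈ Set.Ioo a b,
      r ^ 2 * deriv (fun s => A s * (deriv w s) ^ β) r
        + r * (deriv w r) ^ β
          * (((β : ℝ) - 1) * (1 - A r - (1 - (w r) ^ 2) ^ 2 / r ^ 2 - Λ * r ^ 2)
              + 2 * A r * (deriv w r) ^ 2)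
        + (β : ℝ) * w r * (deriv w r) ^ (β - 1) * (1 - (w r) ^ 2) = 0 := by
  intro β hβ r hr
  obtain ⟨γ, rfl⟩ : ∃ γ, β = γ + 1 := ⟨β - 1, (Nat.succ_pred_eq_of_pos hβ).symm⟩
  have hpow : HasDerivAt (fun s => (deriv w s) ^ (γ + 1))
      ((γ + 1 : ℕ) * (deriv w r) ^ (γ + 1 - 1) * deriv (deriv w) r) r :=
    (hw' r hr).hasDerivAt.pow (γ + 1)
  have hd : deriv (fun s => A s * (deriv w s) ^ (γ + 1)) r
      = deriv A r * (deriv w r) ^ (γ + 1)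
        + A r * ((γ + 1 : ℕ) * (deriv w r) ^ (γ + 1 - 1) * deriv (deriv w) r) :=
    ((hA r hr).hasDerivAt.mul hpow).deriv
  have h1 := hE1 r hr
  have h2 := hE2 r hr
  rw [hd]
  simp only [Nat.add_sub_cancel, Nat.cast_add, Nat.cast_one] at *
  linear_combination (r * (deriv w r) ^ γ * deriv w r) * h1
    + ((γ : ℝ) + 1) * (deriv w r) ^ γ * h2
end

section
/- The function k is strictly negative on the whole interval: k(r) < 0 for all r ∈ [r_h, ρ). -/
lemma contDiffAt_deriv_of_two {w : ℝ → ℝ} {x : ℝ} (h : ContDiffAt ℝ 2 w x) :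
    ContDiffAt ℝ 1 (deriv w) x := by
  have h1 : ContDiffAt ℝ 1 (fderiv ℝ w) x := h.fderiv_right (by norm_num)
  have h2 : ContDiffAt ℝ 1 (fun y => fderiv ℝ w y 1) x := h1.clm_apply contDiffAt_const
  exact h2.congr_of_eventuallyEq (Filter.Eventually.of_forall fun y => (fderiv_apply_one_eq_deriv).symm)

/-- For a noncompact solution of the static spherically symmetric
Einstein–SU(2) Yang–Mills equations with cosmological constant `Λ` extended
across its coordinate horizon at `r_h`, defined on `[r_h, ρ)` with
`r_h < ρ ≤ ∞`, the quantity
`k(r) = (Φ(r) + 2 A(r) w'(r)² - 2 A(r))/r` (where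
`Φ(r) = 1 - A(r) - (1 - w(r)²)²/r² - Λ r²`) is strictly negative on the whole
interval `[r_h, ρ)`. -/
theorem k_negative
    (Λ r_h : ℝ) (ρ : EReal) (hΛ : 0 < Λ) (hrh : Real.sqrt 2 < r_h)
    (hΛrh : 1 < Λ * r_h ^ 2) (hρ : (r_h : EReal) < ρ)
    (A w : ℝ → ℝ)
    (hA : ∀ r : ℝ, r_h ≤ r → (r : EReal) < ρ → ContDiffAt ℝ 1 A r)
    (hw : ∀ r : ℝ, r_h ≤ r → (r : EReal) < ρ → ContDiffAt ℝ 2 w r)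
    (hE1 : ∀ r : ℝ, r_h < r → (r : EReal) < ρ →
      r * deriv A r + 2 * A r * (deriv w r) ^ 2
        = 1 - A r - (1 - (w r) ^ 2) ^ 2 / r ^ 2 - Λ * r ^ 2)
    (hE2 : ∀ r : ℝ, r_h < r → (r : EReal) < ρ →
      r ^ 2 * A r * deriv (deriv w) r
        + r * (1 - A r - (1 - (w r) ^ 2) ^ 2 / r ^ 2 - Λ * r ^ 2) * deriv w r
        + w r * (1 - (w r) ^ 2) = 0)
    (hArh : A r_h = 0)
    (hAneg : ∀ r : ℝ, r_h < r → (r : EReal) < ρ → A r < 0)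
    (hwrh : (1 - (w r_h) ^ 2) ^ 2 < 1) :
    ∀ r : ℝ, r_h ≤ r → (r : EReal) < ρ →
      ((1 - A r - (1 - (w r) ^ 2) ^ 2 / r ^ 2 - Λ * r ^ 2)
          + 2 * A r * (deriv w r) ^ 2 - 2 * A r) / r < 0 := by
  have hrh0 : (0:ℝ) < r_h := lt_trans (Real.sqrt_pos.mpr two_pos) hrh
  have hrh2 : (2:ℝ) < r_h ^ 2 := by
    nlinarith [Real.sq_sqrt (le_of_lt (two_pos (α := ℝ))), Real.sqrt_nonneg 2]
  set W : ℝ → ℝ := deriv w with hWdef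
  set hfun : ℝ → ℝ := fun r => (1 - w r ^ 2) ^ 2 - 2 * r ^ 2 * A r * (W r) ^ 2 with hhdef
  set N : ℝ → ℝ := fun r => 1 - 3 * A r - Λ * r ^ 2 - hfun r / r ^ 2 with hNdef
  -- N equals the quantity in the statement
  have hNeq : ∀ r : ℝ, r ≠ 0 → N r = (1 - A r - (1 - (w r) ^ 2) ^ 2 / r ^ 2 - Λ * r ^ 2)
      + 2 * A r * (W r) ^ 2 - 2 * A r := by
    intro r hr
    rw [hNdef, hhdef]
    field_simp
    ring
  -- continuity of A, w, W, N, hfun on the domain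
  have hcont : ∀ r : ℝ, r_h ≤ r → (r : EReal) < ρ →
      ContinuousAt N r ∧ ContinuousAt hfun r := by
    intro r h1 h2
    have hr0 : r ≠ 0 := ne_of_gt (lt_of_lt_of_le hrh0 h1)
    have cA : ContinuousAt A r := (hA r h1 h2).continuousAt
    have cw : ContinuousAt w r := (hw r h1 h2).continuousAt
    have cW : ContinuousAt W r := (contDiffAt_deriv_of_two (hw r h1 h2)).continuousAt
    have chf : ContinuousAt hfun r := by
      rw [hhdef]
      exact (((continuousAt_const.sub (cw.pow 2)).pow 2).sub
        (((continuousAt_const.mul (continuousAt_id.pow 2)).mul cA).mul (cW.pow 2)))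
    refine ⟨?_, chf⟩
    rw [hNdef]
    exact ((continuousAt_const.sub (continuousAt_const.mul cA)).sub
      (continuousAt_const.mul (continuousAt_id.pow 2))).sub
      (chf.div (continuousAt_id.pow 2) (pow_ne_zero 2 hr0))
  -- derivative of hfun
  have hhd : ∀ r : ℝ, r_h ≤ r → (r : EReal) < ρ →
      HasDerivAt hfun
        ((2 * (1 - w r ^ 2) * (0 - 2 * w r ^ 1 * W r))
          - (((2 * (2 * r ^ 1) * A r + 2 * r ^ 2 * deriv A r) * (W r) ^ 2)
            + (2 * r ^ 2 * A r) * (2 * W r ^ 1 * deriv W r))) r := by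
    intro r h1 h2
    have dA : HasDerivAt A (deriv A r) r := ((hA r h1 h2).differentiableAt one_ne_zero).hasDerivAt
    have dw : HasDerivAt w (W r) r :=
      ((hw r h1 h2).differentiableAt (by norm_num)).hasDerivAt
    have dW : HasDerivAt W (deriv W r) r :=
      ((contDiffAt_deriv_of_two (hw r h1 h2)).differentiableAt one_ne_zero).hasDerivAt
    have d1 : HasDerivAt (fun x => (1 - w x ^ 2) ^ 2)
        (2 * (1 - w r ^ 2) ^ 1 * (0 - 2 * w r ^ 1 * W r)) r :=
      ((hasDerivAt_const r (1:ℝ)).sub (dw.pow 2)).pow 2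
    have c1 : HasDerivAt (fun x : ℝ => 2 * x ^ 2) (2 * (2 * r ^ 1)) r :=
      (hasDerivAt_pow 2 r).const_mul 2
    have d2 : HasDerivAt (fun x => 2 * x ^ 2 * A x * (W x) ^ 2)
        ((2 * (2 * r ^ 1) * A r + 2 * r ^ 2 * deriv A r) * (W r) ^ 2
          + (2 * r ^ 2 * A r) * (2 * W r ^ 1 * deriv W r)) r :=
      (c1.mul dA).mul (dW.pow 2)
    have := d1.sub d2
    rw [hhdef]
    exact this.congr_deriv (by ring)
  -- the derivative identity using the field equations
  have hid : ∀ r : ℝ, r_h < r → (r : EReal) < ρ →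
      ((2 * (1 - w r ^ 2) * (0 - 2 * w r ^ 1 * W r))
          - (((2 * (2 * r ^ 1) * A r + 2 * r ^ 2 * deriv A r) * (W r) ^ 2)
            + (2 * r ^ 2 * A r) * (2 * W r ^ 1 * deriv W r)))
        = 2 * r * (W r) ^ 2 * N r := by
    intro r h1 h2
    have hr0 : r ≠ 0 := ne_of_gt (lt_of_lt_of_le hrh0 (le_of_lt h1))
    have e1 := hE1 r h1 h2
    have e2 := hE2 r h1 h2
    rw [hNdef, hhdef]
    linear_combination (norm := skip) (-2*r*W r^2) * e1 + (-4*W r) * e2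
    field_simp
    ring
  -- N is negative at r_h
  have hNrh : N r_h < 0 := by
    rw [hNdef]
    simp only [hhdef, hArh]
    have h0 : ((1 - w r_h ^ 2) ^ 2 - 2 * r_h ^ 2 * 0 * W r_h ^ 2) / r_h ^ 2
        = (1 - w r_h ^ 2) ^ 2 / r_h ^ 2 := by ring
    rw [h0]
    have hdiv : 0 ≤ (1 - w r_h ^ 2) ^ 2 / r_h ^ 2 :=
      div_nonneg (sq_nonneg _) (sq_nonneg _)
    nlinarith
  -- main claim : N < 0 on the whole interval
  have key : ∀ r : ℝ, r_h ≤ r → (r : EReal) < ρ → N r < 0 := by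
    by_contra hcon
    push_neg at hcon
    obtain ⟨s, hs1, hs2, hs3⟩ := hcon
    set T : Set ℝ := {t | r_h ≤ t ∧ (t : EReal) < ρ ∧ 0 ≤ N t} with hTdef
    have hTne : T.Nonempty := ⟨s, hs1, hs2, hs3⟩
    have hTbd : BddBelow T := ⟨r_h, fun t ht => ht.1⟩
    set r₀ : ℝ := sInf T with hr₀def
    have hr₀s : r₀ ≤ s := csInf_le hTbd ⟨hs1, hs2, hs3⟩
    have hr₀h : r_h ≤ r₀ := le_csInf hTne fun t ht => ht.1
    have hr₀ρ : (r₀ : EReal) < ρ := lt_of_le_of_lt (EReal.coe_le_coe_iff.mpr hr₀s) hs2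
    have hr₀0 : (0:ℝ) < r₀ := lt_of_lt_of_le hrh0 hr₀h
    have hNr₀ : 0 ≤ N r₀ := by
      by_contra hneg
      push_neg at hneg
      have hc : ContinuousAt N r₀ := (hcont r₀ hr₀h hr₀ρ).1
      have hev : ∀ᶠ x in nhds r₀, N x < 0 := hc.eventually_lt continuousAt_const hneg
      obtain ⟨ε, hε, hball⟩ := Metric.eventually_nhds_iff.mp hev
      obtain ⟨t, htT, htlt⟩ := (csInf_lt_iff hTbd hTne).mp
        (show sInf T < r₀ + ε by rw [← hr₀def]; linarith)
      have hge : r₀ ≤ t := csInf_le hTbd htT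
      have : N t < 0 := hball (by rw [Real.dist_eq, abs_lt]; constructor <;> linarith)
      exact absurd htT.2.2 (not_le.mpr this)
    have hrhr₀ : r_h < r₀ := by
      rcases lt_or_eq_of_le hr₀h with h | h
      · exact h
      · exact absurd hNr₀ (not_le.mpr (h ▸ hNrh))
    have hNlt : ∀ x : ℝ, r_h ≤ x → x < r₀ → N x < 0 := by
      intro x hx1 hx2
      by_contra h
      push_neg at h
      have hxρ : (x : EReal) < ρ :=
        lt_trans (EReal.coe_lt_coe_iff.mpr hx2) hr₀ρ
      exact absurd (csInf_le hTbd ⟨hx1, hxρ, h⟩) (not_le.mpr hx2)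
    have hNr₀0 : N r₀ = 0 := by
      refine le_antisymm ?_ hNr₀
      have hc : ContinuousAt N r₀ := (hcont r₀ hr₀h hr₀ρ).1
      have ht : Filter.Tendsto N (nhdsWithin r₀ (Set.Iio r₀)) (nhds (N r₀)) :=
        (hc.continuousWithinAt).tendsto
      refine le_of_tendsto ht ?_
      filter_upwards [Ioo_mem_nhdsLT_of_mem (Set.mem_Ioc.mpr ⟨hrhr₀, le_rfl⟩)] with x hx
      exact le_of_lt (hNlt x (le_of_lt hx.1) hx.2)
    -- hfun is antitone on [r_h, r₀]
    have hanti : AntitoneOn hfun (Set.Icc r_h r₀) := by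
      apply antitoneOn_of_deriv_nonpos (convex_Icc r_h r₀)
      · intro x hx
        have hxρ : (x : EReal) < ρ :=
          lt_of_le_of_lt (EReal.coe_le_coe_iff.mpr hx.2) hr₀ρ
        exact ((hcont x hx.1 hxρ).2).continuousWithinAt
      · intro x hx
        rw [interior_Icc] at hx
        have hxρ : (x : EReal) < ρ := lt_trans (EReal.coe_lt_coe_iff.mpr hx.2) hr₀ρ
        exact ((hhd x (le_of_lt hx.1) hxρ).differentiableAt).differentiableWithinAt
      · intro x hx
        rw [interior_Icc] at hx
        have hxρ : (x : EReal) < ρ := lt_trans (EReal.coe_lt_coe_iff.mpr hx.2) hr₀ρ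
        have hd := hhd x (le_of_lt hx.1) hxρ
        rw [hd.deriv, hid x hx.1 hxρ]
        have hNx : N x < 0 := hNlt x (le_of_lt hx.1) hx.2
        have hx0 : (0:ℝ) < x := lt_trans hrh0 hx.1
        exact mul_nonpos_of_nonneg_of_nonpos (by positivity) hNx.le
    have hhr₀1 : hfun r₀ < 1 := by
      have h1 : hfun r₀ ≤ hfun r_h :=
        hanti (Set.mem_Icc.mpr ⟨le_rfl, hr₀h⟩) (Set.mem_Icc.mpr ⟨hr₀h, le_rfl⟩) hr₀h
      have h2 : hfun r_h = (1 - w r_h ^ 2) ^ 2 := by rw [hhdef]; simp [hArh]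
      rw [h2] at h1
      exact lt_of_le_of_lt h1 hwrh
    -- derivative of hfun at r₀ is 0
    have hd_h : HasDerivAt hfun 0 r₀ := by
      have := hhd r₀ hr₀h hr₀ρ
      rw [hid r₀ hrhr₀ hr₀ρ, hNr₀0, mul_zero] at this
      exact this
    -- derivative of N at r₀
    have dA₀ : HasDerivAt A (deriv A r₀) r₀ :=
      ((hA r₀ hr₀h hr₀ρ).differentiableAt one_ne_zero).hasDerivAt
    set D : ℝ := -(3 * deriv A r₀) - Λ * (2 * r₀ ^ 1)
      - (0 * r₀ ^ 2 - hfun r₀ * (2 * r₀ ^ 1)) / (r₀ ^ 2) ^ 2 with hDdef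
    have dN : HasDerivAt N D r₀ := by
      rw [hNdef, hDdef]
      have h1 : HasDerivAt (fun x : ℝ => 1 - 3 * A x) (0 - 3 * deriv A r₀) r₀ :=
        (hasDerivAt_const r₀ (1:ℝ)).sub (dA₀.const_mul 3)
      have h2 : HasDerivAt (fun x : ℝ => Λ * x ^ 2) (Λ * (2 * r₀ ^ 1)) r₀ :=
        (hasDerivAt_pow 2 r₀).const_mul Λ
      have h3 : HasDerivAt (fun x : ℝ => hfun x / x ^ 2)
          ((0 * r₀ ^ 2 - hfun r₀ * (2 * r₀ ^ 1)) / (r₀ ^ 2) ^ 2) r₀ :=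
        hd_h.div (hasDerivAt_pow 2 r₀) (pow_ne_zero 2 (ne_of_gt hr₀0))
      have := (h1.sub h2).sub h3
      exact this.congr_deriv (by ring)
    -- D is nonnegative (first zero from below)
    have hDge : 0 ≤ D := by
      have hslope := hasDerivAt_iff_tendsto_slope.mp dN
      have ht : Filter.Tendsto (slope N r₀) (nhdsWithin r₀ (Set.Iio r₀)) (nhds D) :=
        hslope.mono_left (nhdsWithin_mono _ fun x hx => ne_of_lt hx)
      refine ge_of_tendsto ht ?_
      filter_upwards [Ioo_mem_nhdsLT_of_mem (Set.mem_Ioc.mpr ⟨hrhr₀, le_rfl⟩)] with x hx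
      have hNx : N x < 0 := hNlt x (le_of_lt hx.1) hx.2
      rw [slope_def_field]
      rw [hNr₀0]
      have : x - r₀ < 0 := by linarith [hx.2]
      have h9 : 0 < (N x - 0) / (x - r₀) := div_pos_of_neg_of_neg (by linarith) this
      linarith
    -- D is negative : contradiction
    have hDlt : D < 0 := by
      have e1 := hE1 r₀ hrhr₀ hr₀ρ
      have hAn := hAneg r₀ hrhr₀ hr₀ρ
      have hr₀2 : (2:ℝ) < r₀ ^ 2 := by nlinarith
      have hNexp : (1 - 3 * A r₀ - Λ * r₀ ^ 2) * r₀ ^ 2 = hfun r₀ := by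
        have := hNr₀0
        rw [hNdef] at this
        field_simp at this
        linarith [this]
      have hhexp : hfun r₀ = (1 - w r₀ ^ 2) ^ 2 - 2 * r₀ ^ 2 * A r₀ * W r₀ ^ 2 := by
        rw [hhdef]
      have h0 : r₀ ≠ 0 := ne_of_gt hr₀0
      field_simp at e1
      have hkey : deriv A r₀ * r₀ ^ 3 = 2 * A r₀ * r₀ ^ 2 - 4 * r₀ ^ 2 * A r₀ * W r₀ ^ 2 := by
        linear_combination e1 + hNexp + hhexp
      have hDval : D = -(3 * deriv A r₀) - 2 * Λ * r₀ + 2 * hfun r₀ / r₀ ^ 3 := by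
        rw [hDdef]
        rw [show (0 * r₀ ^ 2 - hfun r₀ * (2 * r₀ ^ 1)) = -(2 * hfun r₀) * r₀ by ring,
          show ((r₀ ^ 2) ^ 2 : ℝ) = r₀ ^ 3 * r₀ by ring,
          mul_div_mul_right _ _ h0]
        ring
      have hcanc : 2 * hfun r₀ / r₀ ^ 3 * r₀ ^ 3 = 2 * hfun r₀ :=
        div_mul_cancel₀ _ (pow_ne_zero 3 h0)
      have hD3 : D * r₀ ^ 3 = -2 * r₀ ^ 2 + 4 * hfun r₀ + 12 * r₀ ^ 2 * A r₀ * W r₀ ^ 2 := by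
        rw [hDval]
        linear_combination hcanc + (-3) * hkey + 2 * hNexp
      have hpos : (0:ℝ) < r₀ ^ 3 := pow_pos hr₀0 3
      have h1 : (0:ℝ) ≤ 12 * r₀ ^ 2 * W r₀ ^ 2 := by positivity
      have h12 : 12 * r₀ ^ 2 * A r₀ * W r₀ ^ 2 ≤ 0 := by
        rw [show 12 * r₀ ^ 2 * A r₀ * W r₀ ^ 2 = 12 * r₀ ^ 2 * W r₀ ^ 2 * A r₀ by ring]
        exact mul_nonpos_of_nonneg_of_nonpos h1 hAn.le
      have hfin : D * r₀ ^ 3 < 0 := by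
        rw [hD3]; linarith [h12, hhr₀1, hr₀2]
      by_contra hD0
      push_neg at hD0
      exact absurd hfin (not_lt.mpr (mul_nonneg hD0 hpos.le))
    exact absurd hDlt (not_lt.mpr hDge)
  -- conclude
  intro r h1 h2
  have hr0 : (0:ℝ) < r := lt_of_lt_of_le hrh0 h1
  have hNr := key r h1 h2
  rw [hNeq r (ne_of_gt hr0)] at hNr
  exact div_neg_of_neg_of_pos hNr hr0
end

section
/- For all r ∈ [r_h, ρ) one has 0 ≤ h(r) ≤ h(r_h) < 1; in particular, for all r ∈ (r_h, ρ), (1 − w(r)²)² < 1 (so that w(r)² < 2) and −2·r²·A(r)·w'(r)² < 1. -/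
open Set Filter Topology

/-- If `w` is `C²` at `x`, then `deriv w` is differentiable at `x`. -/
lemma EYM_aux_deriv_diff {w : ℝ → ℝ} {x : ℝ}
    (h : ContDiffAt ℝ 2 w x) : DifferentiableAt ℝ (deriv w) x := by
  obtain ⟨u, hu, hcd⟩ := h.contDiffOn le_rfl (by norm_num)
  obtain ⟨t, htu, ht, hxt⟩ := mem_nhds_iff.mp hu
  have h2 : ContDiffOn ℝ 2 w t := hcd.mono htu
  have h3 : ContDiffOn ℝ 1 (deriv w) t := h2.deriv_of_isOpen ht (by norm_num)
  exact ((h3 x hxt).differentiableWithinAt one_ne_zero).differentiableAt (ht.mem_nhds hxt)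

set_option maxHeartbeats 1000000

/-- For a noncompact solution of the static spherically symmetric
Einstein–SU(2) Yang–Mills equations with cosmological constant `Λ` extended
across its coordinate horizon at `r_h`, defined on `[r_h, ρ)` with
`r_h < ρ ≤ ∞`, the quantity `h(r) = (1 - w(r)²)² - 2 r² A(r) w'(r)²` satisfies
`0 ≤ h(r) ≤ h(r_h) < 1` on `[r_h, ρ)`; in particular, for `r ∈ (r_h, ρ)`,
`(1 - w(r)²)² < 1` (so `w(r)² < 2`) and `-2 r² A(r) w'(r)² < 1`. -/
theorem h_bounds
    (Λ r_h : ℝ) (ρ : EReal) (hΛ : 0 < Λ) (hrh : Real.sqrt 2 < r_h)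
    (hΛrh : 1 < Λ * r_h ^ 2) (hρ : (r_h : EReal) < ρ)
    (A w : ℝ → ℝ)
    (hA : ∀ r : ℝ, r_h ≤ r → (r : EReal) < ρ → ContDiffAt ℝ 1 A r)
    (hw : ∀ r : ℝ, r_h ≤ r → (r : EReal) < ρ → ContDiffAt ℝ 2 w r)
    (hE1 : ∀ r : ℝ, r_h < r → (r : EReal) < ρ →
      r * deriv A r + 2 * A r * (deriv w r) ^ 2
        = 1 - A r - (1 - (w r) ^ 2) ^ 2 / r ^ 2 - Λ * r ^ 2)
    (hE2 : ∀ r : ℝ, r_h < r → (r : EReal) < ρ →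
      r ^ 2 * A r * deriv (deriv w) r
        + r * (1 - A r - (1 - (w r) ^ 2) ^ 2 / r ^ 2 - Λ * r ^ 2) * deriv w r
        + w r * (1 - (w r) ^ 2) = 0)
    (hArh : A r_h = 0)
    (hAneg : ∀ r : ℝ, r_h < r → (r : EReal) < ρ → A r < 0)
    (hwrh : (1 - (w r_h) ^ 2) ^ 2 < 1) :
    (∀ r : ℝ, r_h ≤ r → (r : EReal) < ρ →
        0 ≤ (1 - (w r) ^ 2) ^ 2 - 2 * r ^ 2 * A r * (deriv w r) ^ 2
        ∧ (1 - (w r) ^ 2) ^ 2 - 2 * r ^ 2 * A r * (deriv w r) ^ 2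
            ≤ (1 - (w r_h) ^ 2) ^ 2 - 2 * r_h ^ 2 * A r_h * (deriv w r_h) ^ 2
        ∧ (1 - (w r_h) ^ 2) ^ 2 - 2 * r_h ^ 2 * A r_h * (deriv w r_h) ^ 2 < 1)
    ∧ (∀ r : ℝ, r_h < r → (r : EReal) < ρ →
        (1 - (w r) ^ 2) ^ 2 < 1 ∧ (w r) ^ 2 < 2
        ∧ -(2 * r ^ 2 * A r * (deriv w r) ^ 2) < 1) := by
  have hrh0 : 0 < r_h := lt_trans (Real.sqrt_pos.mpr (by norm_num)) hrh
  have hrh2 : 2 < r_h ^ 2 := by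
    have h1 : Real.sqrt 2 ^ 2 < r_h ^ 2 :=
      pow_lt_pow_left₀ hrh (Real.sqrt_nonneg 2) (by norm_num)
    rwa [Real.sq_sqrt (by norm_num : (0:ℝ) ≤ 2)] at h1
  have hcoe : ∀ {s t : ℝ}, s ≤ t → (t : EReal) < ρ → (s : EReal) < ρ := by
    intro s t hst h
    exact lt_of_le_of_lt (EReal.coe_le_coe_iff.mpr hst) h
  -- regularity
  have hwdiff : ∀ r : ℝ, r_h ≤ r → (r : EReal) < ρ → DifferentiableAt ℝ w r :=
    fun r h1 h2 => (hw r h1 h2).differentiableAt (by norm_num)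
  have hAdiff : ∀ r : ℝ, r_h ≤ r → (r : EReal) < ρ → DifferentiableAt ℝ A r :=
    fun r h1 h2 => (hA r h1 h2).differentiableAt one_ne_zero
  have hw'diff : ∀ r : ℝ, r_h ≤ r → (r : EReal) < ρ → DifferentiableAt ℝ (deriv w) r :=
    fun r h1 h2 => EYM_aux_deriv_diff (hw r h1 h2)
  -- continuity of h
  have hFcont : ∀ r : ℝ, r_h ≤ r → (r : EReal) < ρ →
      ContinuousAt (fun x => (1 - w x ^ 2) ^ 2 - 2 * x ^ 2 * A x * deriv w x ^ 2) r := by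
    intro r h1 h2
    have c1 := (hwdiff r h1 h2).continuousAt
    have c2 := (hAdiff r h1 h2).continuousAt
    have c3 := (hw'diff r h1 h2).continuousAt
    exact ((continuousAt_const.sub (c1.pow 2)).pow 2).sub
      (((continuousAt_const.mul (continuousAt_pow _ 2)).mul c2).mul (c3.pow 2))
  -- derivative of h
  have hFderiv : ∀ r : ℝ, r_h < r → (r : EReal) < ρ →
      HasDerivAt (fun x => (1 - w x ^ 2) ^ 2 - 2 * x ^ 2 * A x * deriv w x ^ 2)
        (2 * deriv w r ^ 2 / r *
          (-(r ^ 2 * (Λ * r ^ 2 - 1 + 3 * A r)) - (1 - w r ^ 2) ^ 2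
            + 2 * r ^ 2 * A r * deriv w r ^ 2)) r := by
    intro r hr hrρ
    have hr0 : r ≠ 0 := ne_of_gt (lt_trans hrh0 hr)
    have hA0 : A r ≠ 0 := ne_of_lt (hAneg r hr hrρ)
    have hw1 : HasDerivAt w (deriv w r) r := (hwdiff r hr.le hrρ).hasDerivAt
    have ha1 : HasDerivAt A (deriv A r) r := (hAdiff r hr.le hrρ).hasDerivAt
    have hw2 : HasDerivAt (deriv w) (deriv (deriv w) r) r := (hw'diff r hr.le hrρ).hasDerivAt
    have h1 := ((hw1.pow 2).const_sub 1).pow 2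
    have h2 := (((hasDerivAt_pow 2 r).const_mul (2:ℝ)).mul ha1).mul (hw2.pow 2)
    have hD := h1.sub h2
    convert hD using 1
    case e'_4 => rfl
    case e'_5 => rfl
    case e'_8 => rfl
    have e1 := hE1 r hr hrρ
    have e2 := hE2 r hr hrρ
    have ha' : deriv A r
        = (1 - A r - (1 - w r ^ 2) ^ 2 / r ^ 2 - Λ * r ^ 2 - 2 * A r * deriv w r ^ 2) / r := by
      rw [eq_div_iff hr0]
      linear_combination e1
    have hv'' : deriv (deriv w) r
        = -(r * (1 - A r - (1 - w r ^ 2) ^ 2 / r ^ 2 - Λ * r ^ 2) * deriv w r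
            + w r * (1 - w r ^ 2)) / (r ^ 2 * A r) := by
      rw [eq_div_iff (mul_ne_zero (pow_ne_zero 2 hr0) hA0)]
      linear_combination e2
    rw [hv'', ha']
    field_simp
    simp only [Pi.mul_apply, Pi.pow_apply]
    ring
  -- derivative of ψ
  have hΨderiv : ∀ r : ℝ, r_h ≤ r → (r : EReal) < ρ →
      HasDerivAt (fun x => Λ * x ^ 2 - 1 + 3 * A x) (Λ * (2 * r) + 3 * deriv A r) r := by
    intro r h1 h2
    have ha1 : HasDerivAt A (deriv A r) r := (hAdiff r h1 h2).hasDerivAt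
    have hp : HasDerivAt (fun x : ℝ => Λ * x ^ 2) (Λ * (2 * r)) r := by
      simpa using (hasDerivAt_pow 2 r).const_mul Λ
    exact (hp.sub_const 1).add (ha1.const_mul 3)
  -- monotonicity of h on intervals where ψ ≥ 0
  have hanti : ∀ b : ℝ, r_h ≤ b → (b : EReal) < ρ →
      (∀ s : ℝ, r_h ≤ s → s ≤ b → 0 ≤ Λ * s ^ 2 - 1 + 3 * A s) →
      AntitoneOn (fun x => (1 - w x ^ 2) ^ 2 - 2 * x ^ 2 * A x * deriv w x ^ 2)
        (Set.Icc r_h b) := by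
    intro b hb hbρ hψ
    have hsub : ∀ s ∈ Set.Icc r_h b, (s : EReal) < ρ := fun s hs => hcoe hs.2 hbρ
    apply antitoneOn_of_deriv_nonpos (convex_Icc r_h b)
    · exact fun s hs => (hFcont s hs.1 (hsub s hs)).continuousWithinAt
    · intro s hs
      rw [interior_Icc] at hs
      exact ((hFderiv s hs.1 (hsub s ⟨hs.1.le, hs.2.le⟩)).differentiableAt).differentiableWithinAt
    · intro s hs
      rw [interior_Icc] at hs
      have hsρ : (s : EReal) < ρ := hsub s ⟨hs.1.le, hs.2.le⟩
      rw [(hFderiv s hs.1 hsρ).deriv]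
      have h1 : 0 ≤ Λ * s ^ 2 - 1 + 3 * A s := hψ s hs.1.le hs.2.le
      have h2 : A s < 0 := hAneg s hs.1 hsρ
      have h3 : 0 < s := lt_trans hrh0 hs.1
      have h4 : 2 * s ^ 2 * A s * deriv w s ^ 2 ≤ 0 := by
        nlinarith [sq_nonneg (deriv w s), sq_nonneg s, mul_nonneg (sq_nonneg s) (sq_nonneg (deriv w s))]
      have h5 : 0 ≤ 2 * deriv w s ^ 2 / s := by positivity
      have h6 : -(s ^ 2 * (Λ * s ^ 2 - 1 + 3 * A s)) - (1 - w s ^ 2) ^ 2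
          + 2 * s ^ 2 * A s * deriv w s ^ 2 ≤ 0 := by
        linarith [mul_nonneg (sq_nonneg s) h1, sq_nonneg (1 - w s ^ 2)]
      exact mul_nonpos_of_nonneg_of_nonpos h5 h6
  -- positivity of ψ on [r_h, ρ)
  have hΨpos : ∀ r : ℝ, r_h ≤ r → (r : EReal) < ρ → 0 < Λ * r ^ 2 - 1 + 3 * A r := by
    intro b hb hbρ
    by_contra hcon
    push_neg at hcon
    have hΨcontAt : ∀ s : ℝ, r_h ≤ s → (s : EReal) < ρ →
        ContinuousAt (fun x : ℝ => Λ * x ^ 2 - 1 + 3 * A x) s := by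
      intro s h1 h2
      exact ((continuousAt_const.mul (continuousAt_pow _ 2)).sub continuousAt_const).add
        (continuousAt_const.mul (hAdiff s h1 h2).continuousAt)
    have hΨcont : ContinuousOn (fun x : ℝ => Λ * x ^ 2 - 1 + 3 * A x) (Set.Icc r_h b) :=
      fun s hs => (hΨcontAt s hs.1 (hcoe hs.2 hbρ)).continuousWithinAt
    set C : Set ℝ := Set.Icc r_h b ∩ (fun x : ℝ => Λ * x ^ 2 - 1 + 3 * A x) ⁻¹' Set.Iic 0
      with hCdef
    have hCne : C.Nonempty := ⟨b, ⟨⟨hb, le_rfl⟩, hcon⟩⟩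
    have hCclosed : IsClosed C := hΨcont.preimage_isClosed_of_isClosed isClosed_Icc isClosed_Iic
    have hCcpt : IsCompact C := isCompact_Icc.of_isClosed_subset hCclosed Set.inter_subset_left
    set t₀ : ℝ := sInf C with ht₀def
    have ht₀C : t₀ ∈ C := hCcpt.sInf_mem hCne
    have ht₀Icc : t₀ ∈ Set.Icc r_h b := ht₀C.1
    have ht₀ψ : Λ * t₀ ^ 2 - 1 + 3 * A t₀ ≤ 0 := ht₀C.2
    have ht₀ρ : (t₀ : EReal) < ρ := hcoe ht₀Icc.2 hbρ
    have ht₀gt : r_h < t₀ := by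
      rcases lt_or_eq_of_le ht₀Icc.1 with h | h
      · exact h
      · exfalso
        rw [← h] at ht₀ψ
        rw [hArh] at ht₀ψ
        linarith
    have hpos_before : ∀ s : ℝ, r_h ≤ s → s < t₀ → 0 < Λ * s ^ 2 - 1 + 3 * A s := by
      intro s h1 h2
      by_contra hcon2
      push_neg at hcon2
      have hsC : s ∈ C := ⟨⟨h1, le_trans h2.le ht₀Icc.2⟩, hcon2⟩
      exact absurd (csInf_le hCcpt.bddBelow hsC) (not_le.mpr h2)
    have hΨt₀ : Λ * t₀ ^ 2 - 1 + 3 * A t₀ = 0 := by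
      refine le_antisymm ht₀ψ ?_
      have htend : Filter.Tendsto (fun x : ℝ => Λ * x ^ 2 - 1 + 3 * A x) (𝓝[<] t₀)
          (𝓝 (Λ * t₀ ^ 2 - 1 + 3 * A t₀)) :=
        ((hΨcontAt t₀ ht₀gt.le ht₀ρ)).tendsto.mono_left nhdsWithin_le_nhds
      refine ge_of_tendsto htend ?_
      filter_upwards [Ioo_mem_nhdsLT ht₀gt] with s hs
      exact (hpos_before s hs.1.le hs.2).le
    -- h is antitone on [r_h, t₀], so (1 - w t₀ ^ 2)^2 < 1
    have hΨnonneg : ∀ s : ℝ, r_h ≤ s → s ≤ t₀ → 0 ≤ Λ * s ^ 2 - 1 + 3 * A s := by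
      intro s h1 h2
      rcases lt_or_eq_of_le h2 with h | h
      · exact (hpos_before s h1 h).le
      · rw [h]
        exact le_of_eq hΨt₀.symm
    have hanti₀ := hanti t₀ ht₀gt.le ht₀ρ hΨnonneg
    have hFle : (1 - w t₀ ^ 2) ^ 2 - 2 * t₀ ^ 2 * A t₀ * deriv w t₀ ^ 2
        ≤ (1 - w r_h ^ 2) ^ 2 - 2 * r_h ^ 2 * A r_h * deriv w r_h ^ 2 :=
      hanti₀ ⟨le_rfl, ht₀gt.le⟩ ⟨ht₀gt.le, le_rfl⟩ ht₀gt.le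
    have hAt₀neg : A t₀ < 0 := hAneg t₀ ht₀gt ht₀ρ
    have hP1 : (1 - w t₀ ^ 2) ^ 2 < 1 := by
      have hK : 0 ≤ -(2 * t₀ ^ 2 * A t₀ * deriv w t₀ ^ 2) := by
        nlinarith [mul_nonneg (sq_nonneg t₀) (sq_nonneg (deriv w t₀))]
      rw [hArh] at hFle
      nlinarith
    -- derivative of ψ at t₀ is positive
    have ht₀0 : (0:ℝ) < t₀ := lt_trans hrh0 ht₀gt
    have ht₀2 : 2 < t₀ ^ 2 := by nlinarith
    have hΛt₀ : 1 < Λ * t₀ ^ 2 := by nlinarith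
    have e1 := hE1 t₀ ht₀gt ht₀ρ
    have key : t₀ * (Λ * (2 * t₀) + 3 * deriv A t₀)
        = 2 + 2 * (Λ * t₀ ^ 2 - 1) * deriv w t₀ ^ 2
          - 3 * (1 - w t₀ ^ 2) ^ 2 / t₀ ^ 2 := by
      linear_combination 3 * e1 - (1 + 2 * deriv w t₀ ^ 2) * hΨt₀
    have h7 : 3 * (1 - w t₀ ^ 2) ^ 2 / t₀ ^ 2 < 3 / 2 := by
      rw [div_lt_iff₀ (pow_pos ht₀0 2)]
      nlinarith
    have hdpos : 0 < Λ * (2 * t₀) + 3 * deriv A t₀ := by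
      nlinarith [mul_nonneg (sub_pos.mpr hΛt₀).le (sq_nonneg (deriv w t₀))]
    -- contradiction via the slope from the left
    have hdΨ := hΨderiv t₀ ht₀gt.le ht₀ρ
    have hslope := hasDerivAt_iff_tendsto_slope.mp hdΨ
    have hev : ∀ᶠ s in 𝓝[≠] t₀,
        (0:ℝ) < slope (fun x : ℝ => Λ * x ^ 2 - 1 + 3 * A x) t₀ s :=
      hslope.eventually (lt_mem_nhds hdpos)
    have hle : 𝓝[<] t₀ ≤ 𝓝[≠] t₀ :=
      nhdsWithin_mono t₀ (fun s hs => ne_of_lt hs)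
    have hev' : ∀ᶠ s in 𝓝[<] t₀,
        (0:ℝ) < slope (fun x : ℝ => Λ * x ^ 2 - 1 + 3 * A x) t₀ s := hev.filter_mono hle
    have hmem : Set.Ioo r_h t₀ ∈ 𝓝[<] t₀ := Ioo_mem_nhdsLT ht₀gt
    obtain ⟨s, hs1, hs2⟩ := (hev'.and (eventually_of_mem hmem (fun x hx => hx))).exists
    have hslope_eq : slope (fun x : ℝ => Λ * x ^ 2 - 1 + 3 * A x) t₀ s
        = (Λ * s ^ 2 - 1 + 3 * A s) / (s - t₀) := by
      rw [slope_def_field]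
      rw [hΨt₀]
      ring_nf
    rw [hslope_eq] at hs1
    have hst : s - t₀ < 0 := sub_neg.mpr hs2.2
    have hΨs_neg : Λ * s ^ 2 - 1 + 3 * A s < 0 := by
      rcases div_pos_iff.mp hs1 with ⟨h1, h2⟩ | ⟨h1, h2⟩
      · linarith
      · exact h1
    exact absurd (hpos_before s hs2.1.le hs2.2) (not_lt.mpr hΨs_neg.le)
  -- assemble the conclusions
  have hFrh_eq : (1 - w r_h ^ 2) ^ 2 - 2 * r_h ^ 2 * A r_h * deriv w r_h ^ 2
      = (1 - w r_h ^ 2) ^ 2 := by rw [hArh]; ring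
  have main : ∀ r : ℝ, r_h ≤ r → (r : EReal) < ρ →
      0 ≤ (1 - w r ^ 2) ^ 2 - 2 * r ^ 2 * A r * deriv w r ^ 2
      ∧ (1 - w r ^ 2) ^ 2 - 2 * r ^ 2 * A r * deriv w r ^ 2
          ≤ (1 - w r_h ^ 2) ^ 2 - 2 * r_h ^ 2 * A r_h * deriv w r_h ^ 2 := by
    intro r hr hrρ
    have hAle : A r ≤ 0 := by
      rcases lt_or_eq_of_le hr with h | h
      · exact (hAneg r h hrρ).le
      · rw [← h, hArh]
    constructor
    · nlinarith [sq_nonneg (1 - w r ^ 2), mul_nonneg (sq_nonneg r) (sq_nonneg (deriv w r))]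
    · have hψ : ∀ s : ℝ, r_h ≤ s → s ≤ r → 0 ≤ Λ * s ^ 2 - 1 + 3 * A s :=
        fun s h1 h2 => (hΨpos s h1 (hcoe h2 hrρ)).le
      exact hanti r hr hrρ hψ ⟨le_rfl, hr⟩ ⟨hr, le_rfl⟩ hr
  constructor
  · intro r hr hrρ
    refine ⟨(main r hr hrρ).1, (main r hr hrρ).2, ?_⟩
    rw [hFrh_eq]
    exact hwrh
  · intro r hr hrρ
    have h1 := (main r hr.le hrρ).2
    rw [hFrh_eq] at h1
    have hAr : A r < 0 := hAneg r hr hrρ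
    have hK : 0 ≤ -(2 * r ^ 2 * A r * deriv w r ^ 2) := by
      nlinarith [mul_nonneg (sq_nonneg r) (sq_nonneg (deriv w r))]
    have hP0 : 0 ≤ (1 - w r ^ 2) ^ 2 := sq_nonneg _
    refine ⟨by linarith, ?_, by linarith⟩
    nlinarith [sq_nonneg (w r)]
end

section
/- The metric coefficient A is asymptotically de Sitter: A(r)/r² → −Λ/3 as r → ∞. -/
lemma EYM_deriv_w_contDiff {w : ℝ → ℝ} {r : ℝ} (h : ContDiffAt ℝ 2 w r) :
    ContDiffAt ℝ 1 (deriv w) r := by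
  obtain ⟨u, hu, hcd⟩ := h.contDiffOn (le_refl 2) (by simp)
  have hio : interior u ∈ nhds r := interior_mem_nhds.2 hu
  refine ((hcd.mono interior_subset).deriv_of_isOpen isOpen_interior ?_).contDiffAt hio
  norm_num

lemma EYM_derivE (Λ : ℝ) (A w : ℝ → ℝ) (r : ℝ) (hr : 0 < r) (hAr : A r < 0)
    (hAd : DifferentiableAt ℝ A r) (hwd : DifferentiableAt ℝ w r)
    (hvd : DifferentiableAt ℝ (deriv w) r)
    (e1 : r * deriv A r + 2 * A r * (deriv w r) ^ 2
        = 1 - A r - (1 - (w r) ^ 2) ^ 2 / r ^ 2 - Λ * r ^ 2)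
    (e2 : r ^ 2 * A r * deriv (deriv w) r
        + r * (1 - A r - (1 - (w r) ^ 2) ^ 2 / r ^ 2 - Λ * r ^ 2) * deriv w r
        + w r * (1 - (w r) ^ 2) = 0) :
    deriv (fun s => -A s * deriv w s ^ 2 + (1 - w s ^ 2) ^ 2 / (2 * s ^ 2)) r
      = -(deriv w r ^ 2 / r) * (Λ * r ^ 2 - 1 + A r)
        - deriv w r ^ 2 * (1 - w r ^ 2) ^ 2 / r ^ 3
        + 2 * A r * deriv w r ^ 4 / r
        - (1 - w r ^ 2) ^ 2 / r ^ 3 := by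
  have hr0 : r ≠ 0 := hr.ne'
  have hA' : HasDerivAt A (deriv A r) r := hAd.hasDerivAt
  have hw' : HasDerivAt w (deriv w r) r := hwd.hasDerivAt
  have hv' : HasDerivAt (deriv w) (deriv (deriv w) r) r := hvd.hasDerivAt
  have H : HasDerivAt (fun s => -A s * deriv w s ^ 2 + (1 - w s ^ 2) ^ 2 / (2 * s ^ 2))
      (-deriv A r * deriv w r ^ 2 + -A r * ((2:ℕ) * deriv w r ^ 1 * deriv (deriv w) r)
        + (((2:ℕ) * (1 - w r ^ 2) ^ 1 * (0 - (2:ℕ) * w r ^ 1 * deriv w r)) * (2 * r ^ 2)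
            - (1 - w r ^ 2) ^ 2 * (2 * ((2:ℕ) * r ^ 1))) / (2 * r ^ 2) ^ 2) r := by
    exact (hA'.neg.mul (hv'.pow 2)).add
      ((((hasDerivAt_const r (1:ℝ)).sub (hw'.pow 2)).pow 2).div
        (((hasDerivAt_pow 2 r)).const_mul 2) (by positivity))
  rw [H.deriv]
  have hA'eq : deriv A r
      = (1 - A r - (1 - w r ^ 2) ^ 2 / r ^ 2 - Λ * r ^ 2 - 2 * A r * deriv w r ^ 2) / r := by
    have e1' := e1
    field_simp at e1' ⊢
    linarith [e1']
  have hw'' : deriv (deriv w) r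
      = -(r * (1 - A r - (1 - w r ^ 2) ^ 2 / r ^ 2 - Λ * r ^ 2) * deriv w r
          + w r * (1 - w r ^ 2)) / (r ^ 2 * A r) := by
    have hne : r ^ 2 * A r ≠ 0 := (mul_neg_of_pos_of_neg (pow_pos hr 2) hAr).ne
    rw [eq_div_iff hne]
    linear_combination e2
  rw [hA'eq, hw'']
  have hAne : A r ≠ 0 := hAr.ne
  field_simp
  ring

set_option maxHeartbeats 1000000 in
/-- For a globally defined noncompact solution of the static spherically
symmetric Einstein–SU(2) Yang–Mills equations with cosmological constant `Λ`
extended across its coordinate horizon at `r_h`, the metric coefficient `A`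
is asymptotically de Sitter: `A(r)/r² → -Λ/3` as `r → ∞`. -/
theorem A_asymptotically_deSitter
    (Λ r_h : ℝ) (hΛ : 0 < Λ) (hrh : Real.sqrt 2 < r_h) (hΛrh : 1 < Λ * r_h ^ 2)
    (A w : ℝ → ℝ)
    (hA : ∀ r : ℝ, r_h ≤ r → ContDiffAt ℝ 1 A r)
    (hw : ∀ r : ℝ, r_h ≤ r → ContDiffAt ℝ 2 w r)
    (hE1 : ∀ r : ℝ, r_h < r →
      r * deriv A r + 2 * A r * (deriv w r) ^ 2
        = 1 - A r - (1 - (w r) ^ 2) ^ 2 / r ^ 2 - Λ * r ^ 2)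
    (hE2 : ∀ r : ℝ, r_h < r →
      r ^ 2 * A r * deriv (deriv w) r
        + r * (1 - A r - (1 - (w r) ^ 2) ^ 2 / r ^ 2 - Λ * r ^ 2) * deriv w r
        + w r * (1 - (w r) ^ 2) = 0)
    (hArh : A r_h = 0)
    (hAneg : ∀ r : ℝ, r_h < r → A r < 0)
    (hwrh : (1 - (w r_h) ^ 2) ^ 2 < 1) :
    Filter.Tendsto (fun r => A r / r ^ 2) Filter.atTop (nhds (-(Λ / 3))) := by
  have hrh0 : 0 < r_h := lt_trans (Real.sqrt_pos.mpr (by norm_num)) hrh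
  have hsq : Real.sqrt 2 ^ 2 = 2 := Real.sq_sqrt (by norm_num)
  have hrh2 : 2 < r_h ^ 2 := by nlinarith [Real.sqrt_nonneg 2]
  -- differentiability / continuity facts
  have hv1 : ∀ r : ℝ, r_h ≤ r → ContDiffAt ℝ 1 (deriv w) r :=
    fun r hr => EYM_deriv_w_contDiff (hw r hr)
  have hAd : ∀ r : ℝ, r_h ≤ r → DifferentiableAt ℝ A r :=
    fun r hr => (hA r hr).differentiableAt (by norm_num)
  have hwd : ∀ r : ℝ, r_h ≤ r → DifferentiableAt ℝ w r :=
    fun r hr => (hw r hr).differentiableAt (by norm_num)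
  have hvd : ∀ r : ℝ, r_h ≤ r → DifferentiableAt ℝ (deriv w) r :=
    fun r hr => (hv1 r hr).differentiableAt (by norm_num)
  have hAc : ∀ r : ℝ, r_h ≤ r → ContinuousAt A r := fun r hr => (hA r hr).continuousAt
  have hwc : ∀ r : ℝ, r_h ≤ r → ContinuousAt w r := fun r hr => (hw r hr).continuousAt
  have hvc : ∀ r : ℝ, r_h ≤ r → ContinuousAt (deriv w) r := fun r hr => (hv1 r hr).continuousAt
  have hAle : ∀ r : ℝ, r_h ≤ r → A r ≤ 0 := by
    intro r hr
    rcases eq_or_lt_of_le hr with h | h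
    · rw [← h, hArh]
    · exact (hAneg r h).le
  -- the energy function
  set E : ℝ → ℝ := fun s => -A s * deriv w s ^ 2 + (1 - w s ^ 2) ^ 2 / (2 * s ^ 2) with hEdef
  set e₀ : ℝ := (1 - w r_h ^ 2) ^ 2 / (2 * r_h ^ 2) with he₀def
  clear_value E e₀
  have he₀nonneg : 0 ≤ e₀ := by rw [he₀def]; positivity
  have he₀lt : e₀ < 1 / (2 * r_h ^ 2) := by
    rw [he₀def]
    exact (div_lt_div_iff_of_pos_right (by positivity)).mpr hwrh
  have hErh : E r_h = e₀ := by
    rw [hEdef, he₀def]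
    simp [hArh]
  -- pointwise positivity of r and of Λ r² - 1
  have hrpos : ∀ r : ℝ, r_h ≤ r → 0 < r := fun r hr => lt_of_lt_of_le hrh0 hr
  have hΛr : ∀ r : ℝ, r_h ≤ r → 1 < Λ * r ^ 2 := by
    intro r hr
    have : r_h ^ 2 ≤ r ^ 2 := by nlinarith [hrpos r hr]
    nlinarith
  have hEnonneg : ∀ r : ℝ, r_h ≤ r → 0 ≤ E r := by
    intro r hr
    have h1 : 0 ≤ -A r := by linarith [hAle r hr]
    have h2 : 0 < r := hrpos r hr
    rw [hEdef]
    positivity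
  -- differentiability of E
  have hEdiff : ∀ r : ℝ, r_h ≤ r → DifferentiableAt ℝ E r := by
    intro r hr
    have h2 : 0 < r := hrpos r hr
    rw [hEdef]
    exact (((hAd r hr).neg.mul ((hvd r hr).pow 2)).add
      ((((differentiableAt_const (1:ℝ)).sub ((hwd r hr).pow 2)).pow 2).div
        ((differentiableAt_pow 2).const_mul 2) (by positivity)))
  have hEcont : ContinuousOn E (Set.Ici r_h) :=
    fun r hr => ((hEdiff r hr).continuousAt).continuousWithinAt
  -- formula for deriv E
  have hDE : ∀ r : ℝ, r_h < r →
      deriv E r = -(deriv w r ^ 2 / r) * (Λ * r ^ 2 - 1 + A r)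
        - deriv w r ^ 2 * (1 - w r ^ 2) ^ 2 / r ^ 3
        + 2 * A r * deriv w r ^ 4 / r
        - (1 - w r ^ 2) ^ 2 / r ^ 3 := by
    intro r hr
    rw [hEdef]
    exact EYM_derivE Λ A w r (hrpos r hr.le) (hAneg r hr) (hAd r hr.le) (hwd r hr.le)
      (hvd r hr.le) (hE1 r hr) (hE2 r hr)
  -- Step 1 (Gronwall): E r ≤ (e₀ / r_h) * r
  have hElin : ∀ r : ℝ, r_h ≤ r → E r ≤ e₀ / r_h * r := by
    have hanti : AntitoneOn (fun s => E s / s) (Set.Ici r_h) := by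
      apply antitoneOn_of_deriv_nonpos (convex_Ici r_h)
      · exact hEcont.div continuousOn_id (fun r hr => (hrpos r hr).ne')
      · intro r hr
        rw [interior_Ici] at hr
        exact (((hEdiff r hr.le).div (differentiableAt_id) (hrpos r hr.le).ne')).differentiableWithinAt
      · intro r hr
        rw [interior_Ici] at hr
        have h0 : 0 < r := hrpos r hr.le
        have hd : deriv (fun s => E s / s) r = (deriv E r * r - E r * 1) / r ^ 2 :=
          ((hEdiff r hr.le).hasDerivAt.div (hasDerivAt_id r) h0.ne').deriv
        rw [hd]
        have hDEr := hDE r hr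
        have hΛ1 : 0 < Λ * r ^ 2 - 1 := by linarith [hΛr r hr.le]
        have hAr : A r < 0 := hAneg r hr
        have hv2 : (0:ℝ) ≤ deriv w r ^ 2 := sq_nonneg _
        have hP : (0:ℝ) ≤ (1 - w r ^ 2) ^ 2 := sq_nonneg _
        -- deriv E r ≤ (-A r) * (deriv w r)^2 / r ≤ E r / r
        have key : deriv E r * r ≤ E r := by
          have h1 : deriv E r ≤ -A r * deriv w r ^ 2 / r := by
            rw [hDEr]
            have t1 : -(deriv w r ^ 2 / r) * (Λ * r ^ 2 - 1 + A r)
                ≤ -A r * deriv w r ^ 2 / r - deriv w r ^ 2 / r * (Λ * r ^ 2 - 1) := by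
              field_simp
              nlinarith [sq_nonneg r]
            have t2 : deriv w r ^ 2 * (1 - w r ^ 2) ^ 2 / r ^ 3 ≥ 0 := by positivity
            have t3 : 2 * A r * deriv w r ^ 4 / r ≤ 0 := by
              apply div_nonpos_of_nonpos_of_nonneg
              · nlinarith [pow_le_pow_left₀ (le_refl (0:ℝ)) (le_refl (0:ℝ)) 4, sq_nonneg (deriv w r ^ 2)]
              · exact h0.le
            have t4 : (1 - w r ^ 2) ^ 2 / r ^ 3 ≥ 0 := by positivity
            have t5 : 0 ≤ deriv w r ^ 2 / r * (Λ * r ^ 2 - 1) := by positivity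
            linarith
          have h2 : -A r * deriv w r ^ 2 ≤ E r := by
            rw [hEdef]
            have : (0:ℝ) ≤ (1 - w r ^ 2) ^ 2 / (2 * r ^ 2) := by positivity
            simp only []
            linarith
          calc deriv E r * r ≤ (-A r * deriv w r ^ 2 / r) * r := by
                apply mul_le_mul_of_nonneg_right h1 h0.le
            _ = -A r * deriv w r ^ 2 := by field_simp
            _ ≤ E r := h2
        have : deriv E r * r - E r * 1 ≤ 0 := by linarith
        apply div_nonpos_of_nonpos_of_nonneg this (by positivity)
    intro r hr
    have h : E r / r ≤ e₀ / r_h := by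
      simpa [hErh] using hanti (Set.self_mem_Ici) hr hr
    have h0 : 0 < r := hrpos r hr
    calc E r = (E r / r) * r := by field_simp
      _ ≤ (e₀ / r_h) * r := mul_le_mul_of_nonneg_right h h0.le
  -- Step 2: Λ r² - 1 + A r > 0 on (r_h, ∞)
  have hkey : ∀ r : ℝ, r_h < r → 0 < Λ * r ^ 2 - 1 + A r := by
    have hmono : StrictMonoOn (fun s => s * (Λ * s ^ 2 - 1 + A s)) (Set.Ici r_h) := by
      apply strictMonoOn_of_deriv_pos (convex_Ici r_h)
      · intro r hr
        have hpoly : ContinuousAt (fun s : ℝ => Λ * s ^ 2 - 1) r := by fun_prop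
        exact (continuousAt_id.mul (hpoly.add (hAc r hr))).continuousWithinAt
      · intro r hr
        rw [interior_Ici] at hr
        have h0 : 0 < r := hrpos r hr.le
        have hd : deriv (fun s => s * (Λ * s ^ 2 - 1 + A s)) r
            = 1 * (Λ * r ^ 2 - 1 + A r) + r * (Λ * ((2:ℕ) * r ^ 1) + deriv A r) :=
          ((hasDerivAt_id' (x := r)).mul ((((hasDerivAt_pow 2 r).const_mul Λ).sub_const 1).add
            (hAd r hr.le).hasDerivAt)).deriv
        rw [hd]
        have e1 := hE1 r hr
        have hEr := hElin r hr.le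
        have hEexp : E r = -A r * deriv w r ^ 2 + (1 - w r ^ 2) ^ 2 / (2 * r ^ 2) := by
          rw [hEdef]
        have hv2 : (0:ℝ) ≤ deriv w r ^ 2 := sq_nonneg _
        have hAr : A r < 0 := hAneg r hr
        -- E r < r / r_h
        have hE_lt : E r < r / r_h := by
          have h1 : e₀ / r_h * r < 1 / (2 * r_h ^ 2) / r_h * r :=
            mul_lt_mul_of_pos_right ((div_lt_div_iff_of_pos_right hrh0).mpr he₀lt) h0
          have h2 : 1 / (2 * r_h ^ 2) / r_h * r ≤ r / r_h := by
            rw [div_div, div_mul_eq_mul_div, div_le_div_iff₀ (by positivity) hrh0]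
            nlinarith [mul_nonneg (mul_pos h0 hrh0).le (by nlinarith : (0:ℝ) ≤ 2 * r_h ^ 2 - 1)]
          linarith
        -- r / r_h < Λ * r ^ 2
        have hΛrr : r / r_h < Λ * r ^ 2 := by
          rw [div_lt_iff₀ hrh0]
          nlinarith [mul_nonneg (mul_nonneg (mul_nonneg hΛ.le h0.le) hrh0.le)
            (sub_nonneg.mpr hr.le)]
        have hexp : 1 * (Λ * r ^ 2 - 1 + A r) + r * (Λ * ((2:ℕ) * r ^ 1) + deriv A r)
            = 2 * (Λ * r ^ 2) - 2 * E r - 4 * A r * deriv w r ^ 2 := by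
          push_cast
          rw [hEexp]
          linear_combination e1
        rw [hexp]
        have hv3 : 0 ≤ -A r * deriv w r ^ 2 := mul_nonneg (by linarith) hv2
        linarith
    intro r hr
    have h := hmono Set.self_mem_Ici (Set.mem_Ici.mpr hr.le) hr
    simp only [hArh] at h
    have h0 : 0 < r := hrpos r hr.le
    have hbase : 0 < r_h * (Λ * r_h ^ 2 - 1 + 0) := by
      have : 0 < Λ * r_h ^ 2 - 1 := by linarith
      nlinarith
    have : 0 < r * (Λ * r ^ 2 - 1 + A r) := lt_trans hbase h
    nlinarith
  -- Step 3: E is nonincreasing, hence E ≤ e₀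
  have hEbound : ∀ r : ℝ, r_h ≤ r → E r ≤ e₀ := by
    have hanti : AntitoneOn E (Set.Ici r_h) := by
      apply antitoneOn_of_deriv_nonpos (convex_Ici r_h) hEcont
      · intro r hr
        rw [interior_Ici] at hr
        exact (hEdiff r hr.le).differentiableWithinAt
      · intro r hr
        rw [interior_Ici] at hr
        have h0 := hrpos r hr.le
        rw [hDE r hr]
        have hk := hkey r hr
        have hAr := hAneg r hr
        have t1 : 0 ≤ deriv w r ^ 2 / r * (Λ * r ^ 2 - 1 + A r) :=
          mul_nonneg (by positivity) hk.le
        have t2 : 0 ≤ deriv w r ^ 2 * (1 - w r ^ 2) ^ 2 / r ^ 3 := by positivity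
        have t3 : 2 * A r * deriv w r ^ 4 / r ≤ 0 := by
          apply div_nonpos_of_nonpos_of_nonneg _ h0.le
          nlinarith [sq_nonneg (deriv w r ^ 2)]
        have t4 : 0 ≤ (1 - w r ^ 2) ^ 2 / r ^ 3 := by positivity
        linarith
    intro r hr
    simpa [hErh] using hanti Set.self_mem_Ici (Set.mem_Ici.mpr hr) hr
  have he₀quarter : e₀ < 1 / 4 := by
    have : 1 / (2 * r_h ^ 2) < 1 / 4 := by
      rw [div_lt_div_iff₀ (by positivity) (by norm_num)]
      linarith
    linarith
  -- Step 4: the function ψ = r A + Λ r³/3 has derivative in [0, 2]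
  have hψd : ∀ r : ℝ, r_h < r → deriv (fun s => s * A s + Λ * s ^ 3 / 3) r
      = 1 - (1 - w r ^ 2) ^ 2 / r ^ 2 - 2 * A r * deriv w r ^ 2 := by
    intro r hr
    have h0 := hrpos r hr.le
    have hd : deriv (fun s => s * A s + Λ * s ^ 3 / 3) r
        = (1 * A r + r * deriv A r) + Λ * ((3:ℕ) * r ^ 2) / 3 :=
      (((hasDerivAt_id' (x := r)).mul (hAd r hr.le).hasDerivAt).add
        (((hasDerivAt_pow 3 r).const_mul Λ).div_const 3)).deriv
    rw [hd]
    have e1 := hE1 r hr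
    push_cast
    linarith
  have hψcont : ContinuousOn (fun s => s * A s + Λ * s ^ 3 / 3) (Set.Ici r_h) := by
    intro r hr
    have hpoly : ContinuousAt (fun s : ℝ => Λ * s ^ 3 / 3) r := by fun_prop
    exact ((continuousAt_id.mul (hAc r hr)).add hpoly).continuousWithinAt
  have hψdiff : ∀ r : ℝ, r_h < r → DifferentiableAt ℝ (fun s => s * A s + Λ * s ^ 3 / 3) r := by
    intro r hr
    exact (differentiableAt_id.mul (hAd r hr.le)).add
      (((differentiableAt_pow 3).const_mul Λ).div_const 3)
  have hψbnd : ∀ r : ℝ, r_h < r →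
      0 ≤ deriv (fun s => s * A s + Λ * s ^ 3 / 3) r ∧
      deriv (fun s => s * A s + Λ * s ^ 3 / 3) r ≤ 2 := by
    intro r hr
    have h0 := hrpos r hr.le
    have hAr := hAneg r hr
    have hEb := hEbound r hr.le
    have hEexp : E r = -A r * deriv w r ^ 2 + (1 - w r ^ 2) ^ 2 / (2 * r ^ 2) := by rw [hEdef]
    have hv2 : (0:ℝ) ≤ -A r * deriv w r ^ 2 := mul_nonneg (by linarith) (sq_nonneg _)
    have hPn : (0:ℝ) ≤ (1 - w r ^ 2) ^ 2 / (2 * r ^ 2) := by positivity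
    have hPP : (1 - w r ^ 2) ^ 2 / r ^ 2 = 2 * ((1 - w r ^ 2) ^ 2 / (2 * r ^ 2)) := by
      field_simp
    rw [hEexp] at hEb
    rw [hψd r hr]
    constructor
    · rw [hPP]
      linarith
    · rw [hPP]
      linarith
  have hψlb : ∀ r : ℝ, r_h ≤ r → Λ * r_h ^ 3 / 3 ≤ r * A r + Λ * r ^ 3 / 3 := by
    have hmono : MonotoneOn (fun s => s * A s + Λ * s ^ 3 / 3) (Set.Ici r_h) := by
      apply monotoneOn_of_deriv_nonneg (convex_Ici r_h) hψcont
      · intro r hr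
        rw [interior_Ici] at hr
        exact (hψdiff r hr).differentiableWithinAt
      · intro r hr
        rw [interior_Ici] at hr
        exact (hψbnd r hr).1
    intro r hr
    have := hmono Set.self_mem_Ici (Set.mem_Ici.mpr hr) hr
    simp only [hArh] at this
    calc Λ * r_h ^ 3 / 3 = r_h * 0 + Λ * r_h ^ 3 / 3 := by ring
      _ ≤ r * A r + Λ * r ^ 3 / 3 := this
  have hψub : ∀ r : ℝ, r_h ≤ r →
      r * A r + Λ * r ^ 3 / 3 ≤ Λ * r_h ^ 3 / 3 + 2 * (r - r_h) := by
    have hanti : AntitoneOn (fun s => (s * A s + Λ * s ^ 3 / 3) - 2 * s) (Set.Ici r_h) := by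
      apply antitoneOn_of_deriv_nonpos (convex_Ici r_h)
      · exact hψcont.sub (continuousOn_const.mul continuousOn_id)
      · intro r hr
        rw [interior_Ici] at hr
        exact ((hψdiff r hr).sub ((differentiableAt_id).const_mul 2)).differentiableWithinAt
      · intro r hr
        rw [interior_Ici] at hr
        have hd : deriv (fun s => (s * A s + Λ * s ^ 3 / 3) - 2 * s) r
            = deriv (fun s => s * A s + Λ * s ^ 3 / 3) r - 2 * 1 :=
          ((hψdiff r hr).hasDerivAt.sub ((hasDerivAt_id r).const_mul 2)).deriv
        rw [hd]
        linarith [(hψbnd r hr).2]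
    intro r hr
    have h := hanti Set.self_mem_Ici (Set.mem_Ici.mpr hr) hr
    simp only [hArh] at h
    have : r * A r + Λ * r ^ 3 / 3 - 2 * r ≤ r_h * 0 + Λ * r_h ^ 3 / 3 - 2 * r_h := h
    linarith
  -- Step 5: squeeze
  have hub : Filter.Tendsto (fun r : ℝ => (Λ * r_h ^ 3 / 3 + 2 * r) / r ^ 3)
      Filter.atTop (nhds 0) := by
    have h1 : Filter.Tendsto (fun r : ℝ => Λ * r_h ^ 3 / 3 / r ^ 3) Filter.atTop (nhds 0) :=
      Filter.Tendsto.div_atTop tendsto_const_nhds (Filter.tendsto_pow_atTop (by norm_num))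
    have h2 : Filter.Tendsto (fun r : ℝ => 2 / r ^ 2) Filter.atTop (nhds 0) :=
      Filter.Tendsto.div_atTop tendsto_const_nhds (Filter.tendsto_pow_atTop (by norm_num))
    have h3 := h1.add h2
    rw [add_zero] at h3
    apply h3.congr'
    filter_upwards [Filter.eventually_gt_atTop (0:ℝ)] with r hr
    field_simp
  have h0' : Filter.Tendsto (fun r : ℝ => (r * A r + Λ * r ^ 3 / 3) / r ^ 3)
      Filter.atTop (nhds 0) := by
    apply squeeze_zero'
    · filter_upwards [Filter.eventually_ge_atTop r_h] with r hr
      have h0 := hrpos r hr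
      have hl := hψlb r hr
      have : (0:ℝ) ≤ Λ * r_h ^ 3 / 3 := by positivity
      apply div_nonneg (by linarith) (by positivity)
    · filter_upwards [Filter.eventually_ge_atTop r_h] with r hr
      have h0 := hrpos r hr
      have hu := hψub r hr
      have hu2 : r * A r + Λ * r ^ 3 / 3 ≤ Λ * r_h ^ 3 / 3 + 2 * r := by linarith
      exact (div_le_div_iff_of_pos_right (show (0:ℝ) < r ^ 3 by positivity)).mpr hu2
    · exact hub
  have hfin := h0'.sub_const (Λ / 3)
  rw [zero_sub] at hfin
  apply hfin.congr'
  filter_upwards [Filter.eventually_gt_atTop (0:ℝ)] with r hr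
  have hr0 : r ≠ 0 := hr.ne'
  field_simp
  ring
end

section
/- The Yang–Mills potential converges: w'(r) → 0 as r → ∞, and there exists a finite w_∞ ∈ ℝ such that w(r) → w_∞ as r → ∞. -/
set_option maxHeartbeats 1000000

open Filter Set Real

lemma aux_deriv_contDiffAt {f : ℝ → ℝ} {x : ℝ} (h : ContDiffAt ℝ 2 f x) :
    ContDiffAt ℝ 1 (deriv f) x := by
  obtain ⟨u, hu, hcd⟩ := h.contDiffOn le_rfl (by simp)
  obtain ⟨t, hts, ht, hxt⟩ := mem_nhds_iff.1 hu
  have h1 : ContDiffOn ℝ 1 (deriv f) t := (hcd.mono hts).deriv_of_isOpen ht (by norm_num)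
  exact h1.contDiffAt (ht.mem_nhds hxt)

lemma aux_deriv_nonpos_of_touch {f : ℝ → ℝ} {a c f' : ℝ} (hd : HasDerivAt f f' c)
    (hac : a < c) (hpos : ∀ s, a < s → s < c → 0 < f s) (hfc : f c = 0) : f' ≤ 0 := by
  have h1 : Filter.Tendsto (slope f c) (nhdsWithin c (Set.Iio c)) (nhds f') :=
    (hasDerivAt_iff_tendsto_slope.1 hd).mono_left
      (nhdsWithin_mono c fun x hx => ne_of_lt hx)
  refine le_of_tendsto h1 ?_
  filter_upwards [Ioo_mem_nhdsLT_of_mem (⟨hac, le_rfl⟩ : c ∈ Set.Ioc a c)] with s hs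
  have hfs := hpos s hs.1 hs.2
  rw [slope_def_field, hfc, sub_zero]
  exact div_nonpos_of_nonneg_of_nonpos hfs.le (by linarith [hs.2])

/-- For a globally defined noncompact solution of the static spherically
symmetric Einstein–SU(2) Yang–Mills equations with cosmological constant `Λ`
extended across its coordinate horizon at `r_h`, the Yang–Mills potential
converges: `w'(r) → 0` as `r → ∞`, and `w(r)` tends to a finite limit `w_∞`
as `r → ∞`. -/
theorem w_converges
    (Λ r_h : ℝ) (hΛ : 0 < Λ) (hrh : Real.sqrt 2 < r_h) (hΛrh : 1 < Λ * r_h ^ 2)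
    (A w : ℝ → ℝ)
    (hA : ∀ r : ℝ, r_h ≤ r → ContDiffAt ℝ 1 A r)
    (hw : ∀ r : ℝ, r_h ≤ r → ContDiffAt ℝ 2 w r)
    (hE1 : ∀ r : ℝ, r_h < r →
      r * deriv A r + 2 * A r * (deriv w r) ^ 2
        = 1 - A r - (1 - (w r) ^ 2) ^ 2 / r ^ 2 - Λ * r ^ 2)
    (hE2 : ∀ r : ℝ, r_h < r →
      r ^ 2 * A r * deriv (deriv w) r
        + r * (1 - A r - (1 - (w r) ^ 2) ^ 2 / r ^ 2 - Λ * r ^ 2) * deriv w r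
        + w r * (1 - (w r) ^ 2) = 0)
    (hArh : A r_h = 0)
    (hAneg : ∀ r : ℝ, r_h < r → A r < 0)
    (hwrh : (1 - (w r_h) ^ 2) ^ 2 < 1) :
    Filter.Tendsto (fun r => deriv w r) Filter.atTop (nhds 0)
    ∧ ∃ w_inf : ℝ, Filter.Tendsto w Filter.atTop (nhds w_inf) := by
  -- basic numeric facts
  have h2 : (2:ℝ) < r_h ^ 2 := by
    have h0 : (0:ℝ) ≤ Real.sqrt 2 := Real.sqrt_nonneg 2
    nlinarith [Real.sq_sqrt (by norm_num : (0:ℝ) ≤ 2)]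
  have hrh0 : (0:ℝ) < r_h := lt_of_le_of_lt (Real.sqrt_nonneg 2) hrh
  set W : ℝ → ℝ := deriv w with hWdef
  set B : ℝ → ℝ := fun s => -A s with hBdef
  set db : ℝ → ℝ := fun s => (Λ*s^2 - 1 + 1/s^2)/3 with hdbdef
  set D : ℝ → ℝ := fun s => 2*s^2*(B s)*(W s)^2 + (1 - (w s)^2)^2 with hDdef
  have hWdef' : W = deriv w := hWdef
  clear_value W
  clear_value B db D
  -- continuity facts
  have hwC : ∀ r, r_h ≤ r → ContinuousAt w r := fun r hr => (hw r hr).continuousAt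
  have hWC : ∀ r, r_h ≤ r → ContinuousAt W r := by
    intro r hr; rw [hWdef']; exact (aux_deriv_contDiffAt (hw r hr)).continuousAt
  have hAC : ∀ r, r_h ≤ r → ContinuousAt A r := fun r hr => (hA r hr).continuousAt
  have hBC : ∀ r, r_h ≤ r → ContinuousAt B r := by
    intro r hr; rw [hBdef]; exact (hAC r hr).neg
  have hDC : ∀ r, r_h ≤ r → ContinuousAt D r := by
    intro r hr
    rw [hDdef]
    have hBC' : ContinuousAt B r := hBC r hr
    exact ((((continuousAt_const.mul ((continuousAt_id.pow 2))).mul (hBC r hr)).mul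
      ((hWC r hr).pow 2)).add ((continuousAt_const.sub ((hwC r hr).pow 2)).pow 2))
  have hdbC : ∀ r, 0 < r → ContinuousAt db r := by
    intro r hr
    rw [hdbdef]
    exact (((continuousAt_const.mul (continuousAt_id.pow 2)).sub continuousAt_const).add
      (continuousAt_const.div (continuousAt_id.pow 2) (pow_ne_zero 2 hr.ne'))).div_const 3
  -- differentiability facts
  have hdw : ∀ r, r_h ≤ r → HasDerivAt w (W r) r := by
    intro r hr; rw [hWdef']; exact ((hw r hr).differentiableAt (by norm_num)).hasDerivAt
  have hdW : ∀ r, r_h ≤ r → HasDerivAt W (deriv W r) r := by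
    intro r hr; rw [hWdef']
    exact ((aux_deriv_contDiffAt (hw r hr)).differentiableAt (by norm_num)).hasDerivAt
  have hdA : ∀ r, r_h ≤ r → HasDerivAt A (deriv A r) r := fun r hr =>
    ((hA r hr).differentiableAt (by norm_num)).hasDerivAt
  -- derivative of B
  have hdB : ∀ r, r_h < r → HasDerivAt B
      ((Λ*r^2 - 1 - B r + (1 - (w r)^2)^2/r^2 - 2*(B r)*(W r)^2)/r) r := by
    intro r hr
    have hr0 : (0:ℝ) < r := lt_trans hrh0 hr
    have h0 : HasDerivAt B (-(deriv A r)) r := by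
      rw [hBdef]; exact (hdA r hr.le).neg
    convert h0 using 1
    have hE := hE1 r hr
    have hrne : r ≠ 0 := ne_of_gt hr0
    field_simp [hBdef]
    field_simp at hE
    simp only [hBdef]; linear_combination hE
  -- derivative of s * B s
  have hdRB : ∀ r, r_h < r → HasDerivAt (fun s => s * B s)
      (Λ*r^2 - 1 + (1 - (w r)^2)^2/r^2 - 2*(B r)*(W r)^2) r := by
    intro r hr
    have hr0 : (0:ℝ) < r := lt_trans hrh0 hr
    have hrne : r ≠ 0 := ne_of_gt hr0
    have h0 := (hasDerivAt_id r).mul (hdB r hr)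
    refine h0.congr_deriv ?_
    simp only [id_eq]; field_simp
    ring
  -- the main derivative identity for D
  have hdD : ∀ r, r_h < r → HasDerivAt D
      (2*r*(W r)^2*(1 + 3*(B r) - (1 - (w r)^2)^2/r^2 - Λ*r^2 - 2*(B r)*(W r)^2)) r := by
    intro r hr
    have hr0 : (0:ℝ) < r := lt_trans hrh0 hr
    have hrne : r ≠ 0 := ne_of_gt hr0
    have hB' : HasDerivAt B (-(deriv A r)) r := by
      rw [hBdef]; exact (hdA r hr.le).neg
    have hw' := hdw r hr.le
    have hW' := hdW r hr.le
    have e1 : HasDerivAt (fun s => 2*s^2*(B s)*(W s)^2)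
        (((2*(2*r))*(B r) + 2*r^2*(-(deriv A r)))*(W r)^2
          + 2*r^2*(B r)*(2*(W r)*(deriv W r))) r := by
      have ha : HasDerivAt (fun s => 2*s^2*(B s)) ((2*(2*r))*(B r) + 2*r^2*(-(deriv A r))) r := by
        have := ((hasDerivAt_pow 2 r).const_mul 2).mul hB'
        refine this.congr_deriv ?_
        ring
      have hb : HasDerivAt (fun s => (W s)^2) (2*(W r)*(deriv W r)) r := by
        have := hW'.pow 2
        refine this.congr_deriv ?_
        ring
      have := ha.mul hb
      first
      | exact this
      | (convert this using 1; ring)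
    have e2 : HasDerivAt (fun s => (1 - (w s)^2)^2)
        (2*(1 - (w r)^2)*(-(2*(w r)*(W r)))) r := by
      have h1 : HasDerivAt (fun s => 1 - (w s)^2) (-(2*(w r)*(W r))) r := by
        have := (hasDerivAt_const r (1:ℝ)).sub (hw'.pow 2)
        refine this.congr_deriv ?_
        ring
      have := h1.pow 2
      refine this.congr_deriv ?_
      ring
    have h0 := e1.add e2
    have heq : HasDerivAt D
        (((2*(2*r))*(B r) + 2*r^2*(-(deriv A r)))*(W r)^2
          + 2*r^2*(B r)*(2*(W r)*(deriv W r)) + 2*(1 - (w r)^2)*(-(2*(w r)*(W r)))) r := by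
      rw [hDdef]; exact h0
    convert heq using 1
    have hEa := hE1 r hr
    have hEb := hE2 r hr
    simp only [hBdef]
    linear_combination (2*r*(W r)^2) * hEa + (4*(W r)) * hEb
  -- derivative of the barrier function db
  have hddb : ∀ r, 0 < r → HasDerivAt db ((2*Λ*r - 2/r^3)/3) r := by
    intro r hr0
    have hrne : r ≠ 0 := ne_of_gt hr0
    have h1 : HasDerivAt (fun s : ℝ => Λ*s^2 - 1 + 1/s^2) (2*Λ*r - 2/r^3) r := by
      have ha : HasDerivAt (fun s : ℝ => Λ*s^2) (Λ*(2*r)) r := by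
        simpa using (hasDerivAt_pow 2 r).const_mul Λ
      have hb : HasDerivAt (fun s : ℝ => s^2) (2*r) r := by
        simpa using hasDerivAt_pow 2 r
      have hc : HasDerivAt (fun s : ℝ => 1/s^2) (-(2*r)/(r^2)^2) r := by
        simp only [one_div]; exact hb.inv (by positivity)
      have := (ha.sub_const 1).add hc
      refine this.congr_deriv ?_
      field_simp
      ring
    rw [hdbdef]
    exact h1.div_const 3
  -- good at r_h
  have hBrh : B r_h = 0 := by simp [hBdef, hArh]
  have hgood_rh : B r_h < db r_h ∧ D r_h < 1 := by
    constructor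
    · rw [hBrh]
      simp only [hdbdef]
      have : 0 < 1/r_h^2 := by positivity
      nlinarith
    · simp only [hDdef, hBrh]
      simpa using hwrh
  -- B is nonnegative on [r_h, ∞)
  have hBnn : ∀ r, r_h ≤ r → 0 ≤ B r := by
    intro r hr
    rcases eq_or_lt_of_le hr with rfl | hlt
    · exact le_of_eq hBrh.symm
    · simp only [hBdef]
      linarith [hAneg r hlt]
  -- THE INVARIANT REGION
  have good : ∀ r, r_h ≤ r → B r < db r ∧ D r < 1 := by
    by_contra hbad
    push_neg at hbad
    obtain ⟨r₀, hr₀, hviol⟩ := hbad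
    set S : Set ℝ := {s | r_h ≤ s ∧ (db s ≤ B s ∨ 1 ≤ D s)} with hSdef
    have hr₀S : r₀ ∈ S := by
      refine ⟨hr₀, ?_⟩
      by_cases hc1 : B r₀ < db r₀
      · exact Or.inr (hviol hc1)
      · exact Or.inl (not_lt.1 hc1)
    have hSne : S.Nonempty := ⟨r₀, hr₀S⟩
    have hSbd : BddBelow S := ⟨r_h, fun s hs => hs.1⟩
    set c := sInf S with hcdef
    have hcrh : r_h ≤ c := le_csInf hSne (fun s hs => hs.1)
    have hgood_lt : ∀ s, r_h ≤ s → s < c → B s < db s ∧ D s < 1 := by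
      intro s hs hsc
      by_contra hbad2
      have hsS : s ∈ S := by
        refine ⟨hs, ?_⟩
        by_cases hc1 : B s < db s
        · by_cases hc2 : D s < 1
          · exact absurd ⟨hc1, hc2⟩ hbad2
          · exact Or.inr (not_lt.1 hc2)
        · exact Or.inl (not_lt.1 hc1)
      exact absurd (csInf_le hSbd hsS) (not_le.2 hsc)
    have hc0 : (0:ℝ) < c := lt_of_lt_of_le hrh0 hcrh
    have hcS : c ∈ S := by
      by_contra hcS
      have hgc : B c < db c ∧ D c < 1 := by
        have h0 : ¬(db c ≤ B c ∨ 1 ≤ D c) := fun h => hcS ⟨hcrh, h⟩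
        push_neg at h0
        exact h0
      have hev : ∀ᶠ s in nhds c, B s < db s ∧ D s < 1 := by
        have h1 : ContinuousAt (fun s => db s - B s) c := (hdbC c hc0).sub (hBC c hcrh)
        have h2 : ContinuousAt (fun s => 1 - D s) c := continuousAt_const.sub (hDC c hcrh)
        have hl1 : (0:ℝ) < db c - B c := by linarith [hgc.1]
        have hl2 : (0:ℝ) < 1 - D c := by linarith [hgc.2]
        have e1 : ∀ᶠ s in nhds c, 0 < db s - B s := h1.eventually (eventually_gt_nhds hl1)
        have e2 : ∀ᶠ s in nhds c, 0 < 1 - D s := h2.eventually (eventually_gt_nhds hl2)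
        filter_upwards [e1, e2] with s hs1 hs2
        exact ⟨by linarith, by linarith⟩
      obtain ⟨ε, hε, hball⟩ := Metric.eventually_nhds_iff.1 hev
      have hlb : ∀ s ∈ S, c + ε ≤ s := by
        intro s hs
        by_contra hlt
        push_neg at hlt
        have hcs : c ≤ s := csInf_le hSbd hs
        have hd : dist s c < ε := by
          rw [Real.dist_eq, abs_of_nonneg (by linarith)]
          linarith
        have hgs := hball hd
        rcases hs.2 with h | h
        · linarith [hgs.1]
        · linarith [hgs.2]
      have := le_csInf hSne hlb
      linarith
    have hcrh_lt : r_h < c := by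
      rcases eq_or_lt_of_le hcrh with heq | h
      · exfalso
        rcases hcS.2 with h | h
        · rw [← heq] at h; linarith [hgood_rh.1]
        · rw [← heq] at h; linarith [hgood_rh.2]
      · exact h
    obtain ⟨hcin, hcviol⟩ := hcS
    clear_value c
    -- left limits
    have hBle : B c ≤ db c := by
      have ht : Filter.Tendsto (fun s => db s - B s) (nhdsWithin c (Set.Iio c))
          (nhds (db c - B c)) :=
        ((hdbC c hc0).sub (hBC c hcrh)).tendsto.mono_left nhdsWithin_le_nhds
      have hev : ∀ᶠ s in nhdsWithin c (Set.Iio c), 0 ≤ db s - B s := by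
        filter_upwards [Ioo_mem_nhdsLT_of_mem (⟨hcrh_lt, le_rfl⟩ : c ∈ Set.Ioc r_h c)] with s hs
        linarith [(hgood_lt s hs.1.le hs.2).1]
      linarith [ge_of_tendsto ht hev]
    have hDle : D c ≤ 1 := by
      have ht : Filter.Tendsto (fun s => 1 - D s) (nhdsWithin c (Set.Iio c))
          (nhds (1 - D c)) :=
        (continuousAt_const.sub (hDC c hcrh)).tendsto.mono_left nhdsWithin_le_nhds
      have hev : ∀ᶠ s in nhdsWithin c (Set.Iio c), 0 ≤ 1 - D s := by
        filter_upwards [Ioo_mem_nhdsLT_of_mem (⟨hcrh_lt, le_rfl⟩ : c ∈ Set.Ioc r_h c)] with s hs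
        linarith [(hgood_lt s hs.1.le hs.2).2]
      linarith [ge_of_tendsto ht hev]
    have hc2 : (2:ℝ) < c^2 := by nlinarith
    have hΛc : 1 < Λ*c^2 := by nlinarith
    have hdbc_pos : 0 < db c := by
      simp only [hdbdef]
      have : 0 < 1/c^2 := by positivity
      nlinarith
    rcases hcviol with hBtouch | hDtouch
    · -- case: B touches the barrier db
      have hBeq : B c = db c := le_antisymm hBle hBtouch
      have hPle : (1 - (w c)^2)^2 ≤ 1 := by
        have hD := hDle
        simp only [hDdef] at hD
        nlinarith [mul_nonneg (mul_nonneg (by positivity : (0:ℝ) ≤ 2*c^2) (hBnn c hcrh))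
          (sq_nonneg (W c))]
      have hder := (hddb c hc0).sub (hdB c hcrh_lt)
      have hd0 : (2*Λ*c - 2/c^3)/3
          - (Λ*c^2 - 1 - B c + (1 - (w c)^2)^2/c^2 - 2*(B c)*(W c)^2)/c ≤ 0 := by
        refine aux_deriv_nonpos_of_touch hder hcrh_lt ?_
          (by show db c - B c = 0; rw [hBeq]; ring)
        intro s hs1 hs2
        have hgs := (hgood_lt s (le_of_lt hs1) hs2).1
        show 0 < db s - B s
        linarith
      have hcne : c ≠ 0 := ne_of_gt hc0
      have hb3 : 3 * B c * c^2 = (Λ*c^2 - 1)*c^2 + 1 := by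
        rw [hBeq]
        simp only [hdbdef]
        field_simp
      have hpoly : (2*Λ*c - 2/c^3)/3
          - (Λ*c^2 - 1 - B c + (1 - (w c)^2)^2/c^2 - 2*(B c)*(W c)^2)/c
          = (2*c^2 - 1 - 3*(1 - (w c)^2)^2 + 6*c^2*(B c)*(W c)^2)/(3*c^3) := by
        field_simp
        linear_combination hb3
      rw [hpoly] at hd0
      have hnum : 0 < 2*c^2 - 1 - 3*(1 - (w c)^2)^2 + 6*c^2*(B c)*(W c)^2 := by
        have h6 : 0 ≤ 6*c^2*(B c)*(W c)^2 :=
          mul_nonneg (mul_nonneg (by positivity) (hBnn c hcrh)) (sq_nonneg (W c))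
        nlinarith
      have : 0 < (2*c^2 - 1 - 3*(1 - (w c)^2)^2 + 6*c^2*(B c)*(W c)^2)/(3*c^3) := by
        apply div_pos hnum (by positivity)
      linarith
    · -- case: D touches 1 (Gronwall argument)
      have hDeq : D c = 1 := le_antisymm hDle hDtouch
      have hmC : ContinuousOn (fun s => 2*(W s)^2/s) (Set.Icc r_h c) := by
        intro s hs
        exact ((continuousAt_const.mul ((hWC s hs.1).pow 2)).div continuousAt_id
          (ne_of_gt (lt_of_lt_of_le hrh0 hs.1))).continuousWithinAt
      obtain ⟨sM, hsM, hM⟩ := isCompact_Icc.exists_isMaxOn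
        ⟨r_h, Set.left_mem_Icc.2 hcrh_lt.le⟩ hmC
      set M := 2*(W sM)^2/sM with hMdef
      set Φ : ℝ → ℝ := fun s => (1 - D s) * Real.exp (M*s) with hPhidef
      have hPhiD : ∀ s, s ∈ Set.Ioo r_h c → HasDerivAt Φ
          ((-(2*s*(W s)^2*(1 + 3*(B s) - (1 - (w s)^2)^2/s^2 - Λ*s^2 - 2*(B s)*(W s)^2)))*Real.exp (M*s) + (1 - D s)*(Real.exp (M*s)*M)) s := by
        intro s hs
        have h1 : HasDerivAt (fun t => 1 - D t)
            (-(2*s*(W s)^2*(1 + 3*(B s) - (1 - (w s)^2)^2/s^2 - Λ*s^2 - 2*(B s)*(W s)^2))) s := by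
          have := (hasDerivAt_const s (1:ℝ)).sub (hdD s hs.1)
          refine this.congr_deriv ?_
          ring
        have h2 : HasDerivAt (fun t : ℝ => Real.exp (M*t)) (Real.exp (M*s)*M) s := by
          have h3 : HasDerivAt (fun t : ℝ => M*t) M s := by
            simpa using (hasDerivAt_id s).const_mul M
          exact h3.exp
        rw [hPhidef]
        exact h1.mul h2
      have hPhiMono : MonotoneOn Φ (Set.Icc r_h c) := by
        apply monotoneOn_of_deriv_nonneg (convex_Icc r_h c)
        · intro s hs
          rw [hPhidef]
          exact ((continuousAt_const.sub (hDC s hs.1)).mul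
            (Real.continuous_exp.comp
              (continuous_const.mul continuous_id)).continuousAt).continuousWithinAt
        · rw [interior_Icc]
          intro s hs
          exact ((hPhiD s hs).differentiableAt).differentiableWithinAt
        · rw [interior_Icc]
          intro s hs
          rw [(hPhiD s hs).deriv]
          have hgs := hgood_lt s hs.1.le hs.2
          have hs0 : (0:ℝ) < s := lt_trans hrh0 hs.1
          have hsne : s ≠ 0 := ne_of_gt hs0
          have hexp : (0:ℝ) < Real.exp (M*s) := Real.exp_pos _
          have hkey : (1 + 3*(B s) - (1 - (w s)^2)^2/s^2 - Λ*s^2 - 2*(B s)*(W s)^2) - (1 - D s)/s^2 = 1 + 3*(B s) - Λ*s^2 - 1/s^2 := by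
            simp only [hDdef]
            field_simp
            ring
          have h3 : 3*(B s) < Λ*s^2 - 1 + 1/s^2 := by
            have hx := hgs.1
            simp only [hdbdef] at hx
            linarith
          have hbr1 : (1 + 3*(B s) - (1 - (w s)^2)^2/s^2 - Λ*s^2 - 2*(B s)*(W s)^2) ≤ (1 - D s)/s^2 := by linarith [hkey, h3]
          have hnn : (0:ℝ) ≤ 2*s*(W s)^2 := by positivity
          have hbr : 2*s*(W s)^2*(1 + 3*(B s) - (1 - (w s)^2)^2/s^2 - Λ*s^2 - 2*(B s)*(W s)^2) ≤ (2*(W s)^2/s) * (1 - D s) := by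
            calc 2*s*(W s)^2*(1 + 3*(B s) - (1 - (w s)^2)^2/s^2 - Λ*s^2 - 2*(B s)*(W s)^2) ≤ 2*s*(W s)^2*((1 - D s)/s^2) :=
                  mul_le_mul_of_nonneg_left hbr1 hnn
            _ = (2*(W s)^2/s) * (1 - D s) := by field_simp
          have hMb : 2*(W s)^2/s ≤ M := hM ⟨hs.1.le, hs.2.le⟩
          have hDs1 : 0 ≤ 1 - D s := by linarith [hgs.2]
          have h4 : 2*s*(W s)^2*(1 + 3*(B s) - (1 - (w s)^2)^2/s^2 - Λ*s^2 - 2*(B s)*(W s)^2) ≤ M * (1 - D s) :=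
            le_trans hbr (mul_le_mul_of_nonneg_right hMb hDs1)
          nlinarith [mul_nonneg (sub_nonneg.2 h4) hexp.le]
      have hc1 := hPhiMono (Set.left_mem_Icc.2 hcrh_lt.le)
        (Set.right_mem_Icc.2 hcrh_lt.le) hcrh_lt.le
      have hPhic : Φ c = 0 := by
        rw [hPhidef]
        simp [hDeq]
      have hPhirh : 0 < Φ r_h := by
        rw [hPhidef]
        simp only [hDdef, hBrh]
        have hexp : (0:ℝ) < Real.exp (M*r_h) := Real.exp_pos _
        have h5 : (0:ℝ) < 1 - (2*r_h^2*0*(W r_h)^2 + (1 - (w r_h)^2)^2) := by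
          nlinarith [hwrh]
        nlinarith [mul_pos h5 hexp]
      rw [hPhic] at hc1
      linarith
  -- ===== consequences of the invariant region =====
  have hPlt : ∀ r, r_h ≤ r → (1 - (w r)^2)^2 + 2*r^2*(B r)*(W r)^2 < 1 := by
    intro r hr
    have hg := (good r hr).2
    simp only [hDdef] at hg
    linarith
  have hw2 : ∀ r, r_h ≤ r → (w r)^2 < 2 := by
    intro r hr
    have h1 := hPlt r hr
    have h2' : 0 ≤ 2*r^2*(B r)*(W r)^2 :=
      mul_nonneg (mul_nonneg (by positivity) (hBnn r hr)) (sq_nonneg _)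
    nlinarith [sq_nonneg (w r)]
  -- ===== lower bound for B =====
  have hmonoh : MonotoneOn (fun s => s*(B s) - (Λ*s^3/3 - 3/2*s)) (Set.Ici r_h) := by
    apply monotoneOn_of_deriv_nonneg (convex_Ici r_h)
    · intro s hs
      exact ((continuousAt_id.mul (hBC s hs)).sub
        (((continuousAt_const.mul (continuousAt_id.pow 3)).div_const 3).sub
          (continuousAt_const.mul continuousAt_id))).continuousWithinAt
    · rw [interior_Ici]
      intro s hs
      have hpol : HasDerivAt (fun t : ℝ => Λ*t^3/3 - 3/2*t) (Λ*s^2 - 3/2) s := by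
        have h1 := ((hasDerivAt_pow 3 s).const_mul Λ).div_const 3
        have h2 := (hasDerivAt_id s).const_mul (3/2:ℝ)
        have h3 := h1.sub h2
        refine h3.congr_deriv ?_
        push_cast
        ring
      exact ((hdRB s hs).sub hpol).differentiableAt.differentiableWithinAt
    · rw [interior_Ici]
      intro s hs
      have hs0 : (0:ℝ) < s := lt_trans hrh0 hs
      have hpol : HasDerivAt (fun t : ℝ => Λ*t^3/3 - 3/2*t) (Λ*s^2 - 3/2) s := by
        have h1 := ((hasDerivAt_pow 3 s).const_mul Λ).div_const 3
        have h2 := (hasDerivAt_id s).const_mul (3/2:ℝ)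
        have h3 := h1.sub h2
        refine h3.congr_deriv ?_
        push_cast
        ring
      rw [HasDerivAt.deriv (f := fun s => s * B s - (Λ*s^3/3 - 3/2*s)) ((hdRB s hs).sub hpol)]
      have hDs := hPlt s hs.le
      have hs' : r_h < s := hs
      have hs2 : (2:ℝ) < s^2 := by nlinarith [h2, hs', hrh0]
      have hP0 : (0:ℝ) ≤ (1 - (w s)^2)^2 := sq_nonneg _
      have h1 : 2*(B s)*(W s)^2 ≤ 1/s^2 := by
        rw [le_div_iff₀ (by positivity)]
        nlinarith [hDs, hP0]
      have h2 : (0:ℝ) ≤ (1 - (w s)^2)^2/s^2 := by positivity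
      have h3 : 1/s^2 < 1/2 := by
        rw [div_lt_div_iff₀ (by positivity) (by norm_num)]
        linarith
      linarith
  have hBlb : ∀ r, r_h ≤ r → Λ*r^2/3 - (3/2 + Λ*r_h^2/3) ≤ B r := by
    intro r hr
    have hm := hmonoh (Set.mem_Ici.2 (le_refl r_h)) (Set.mem_Ici.2 hr) hr
    simp only [hBrh, mul_zero, zero_sub] at hm
    have hr0 : (0:ℝ) < r := lt_of_lt_of_le hrh0 hr
    have hmul : r_h * (Λ*r_h^2/3) ≤ r * (Λ*r_h^2/3) :=
      mul_le_mul_of_nonneg_right hr (by positivity)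
    have key : r*(Λ*r^2/3 - (3/2 + Λ*r_h^2/3)) ≤ r*(B r) := by nlinarith [hm, hmul, hrh0]
    exact le_of_mul_le_mul_left key hr0
  set R₁ := max r_h (Real.sqrt (9/Λ + 2*r_h^2)) with hR1def
  have hR1rh : r_h ≤ R₁ := le_max_left _ _
  have hR10 : (0:ℝ) < R₁ := lt_of_lt_of_le hrh0 hR1rh
  have hB6 : ∀ r, R₁ ≤ r → Λ*r^2/6 ≤ B r := by
    intro r hr
    have hr2 : 9/Λ + 2*r_h^2 ≤ r^2 := by
      have h1 : Real.sqrt (9/Λ + 2*r_h^2) ≤ r := le_trans (le_max_right _ _) hr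
      have h2 : (0:ℝ) ≤ 9/Λ + 2*r_h^2 := by positivity
      nlinarith [Real.sq_sqrt h2, Real.sqrt_nonneg (9/Λ + 2*r_h^2)]
    have hlb := hBlb r (le_trans hR1rh hr)
    have h9 : Λ*(9/Λ) = 9 := by field_simp
    nlinarith [mul_le_mul_of_nonneg_left hr2 (le_of_lt hΛ)]
  set CC := Real.sqrt (3/Λ) with hCCdef
  have hCC0 : (0:ℝ) ≤ CC := Real.sqrt_nonneg _
  have hCC2 : CC^2 = 3/Λ := Real.sq_sqrt (by positivity)
  have hWb : ∀ r, R₁ ≤ r → |W r| ≤ CC/r^2 := by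
    intro r hr
    have hrh_le : r_h ≤ r := le_trans hR1rh hr
    have hr0 : (0:ℝ) < r := lt_of_lt_of_le hrh0 hrh_le
    have hD := hPlt r hrh_le
    have hB := hB6 r hr
    have hP0 : (0:ℝ) ≤ (1 - (w r)^2)^2 := sq_nonneg _
    have hsq : (W r)^2 ≤ (CC/r^2)^2 := by
      have e1 : (CC/r^2)^2 = 3/(Λ*r^4) := by
        rw [div_pow, hCC2, div_div]
        ring_nf
      rw [e1, le_div_iff₀ (by positivity)]
      nlinarith [hD, hP0, mul_le_mul_of_nonneg_left hB
        (by positivity : (0:ℝ) ≤ 2*r^2*(W r)^2)]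
    calc |W r| = Real.sqrt ((W r)^2) := (Real.sqrt_sq_eq_abs _).symm
    _ ≤ Real.sqrt ((CC/r^2)^2) := Real.sqrt_le_sqrt hsq
    _ = CC/r^2 := Real.sqrt_sq (by positivity)
  -- ===== conclusion 1 : W → 0 =====
  have hconc1 : Filter.Tendsto (fun r => W r) Filter.atTop (nhds 0) := by
    have h1 : Filter.Tendsto (fun r : ℝ => r^2) Filter.atTop Filter.atTop :=
      tendsto_pow_atTop (by norm_num)
    have hg : Filter.Tendsto (fun r : ℝ => CC/r^2) Filter.atTop (nhds 0) :=
      Filter.Tendsto.div_atTop tendsto_const_nhds h1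
    refine squeeze_zero_norm' ?_ hg
    filter_upwards [eventually_ge_atTop R₁] with r hr
    simpa [Real.norm_eq_abs] using hWb r hr
  -- ===== conclusion 2 : w converges =====
  set p : ℝ → ℝ := fun s => w s + CC*s⁻¹ with hpdef
  have hdp : ∀ s, R₁ < s → HasDerivAt p (W s - CC/s^2) s := by
    intro s hs
    have hs0 : (0:ℝ) < s := lt_trans hR10 hs
    have h1 := (hdw s (le_trans hR1rh hs.le)).add
      ((hasDerivAt_inv (ne_of_gt hs0)).const_mul CC)
    rw [hpdef]
    refine h1.congr_deriv ?_
    field_simp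
    ring
  have hpmono : AntitoneOn p (Set.Ici R₁) := by
    apply antitoneOn_of_deriv_nonpos (convex_Ici R₁)
    · intro s hs
      have hs0 : (0:ℝ) < s := lt_of_lt_of_le hR10 hs
      rw [hpdef]
      exact ((hwC s (le_trans hR1rh hs)).add
        (continuousAt_const.mul (continuousAt_inv₀ (ne_of_gt hs0)))).continuousWithinAt
    · rw [interior_Ici]
      intro s hs
      exact (hdp s hs).differentiableAt.differentiableWithinAt
    · rw [interior_Ici]
      intro s hs
      rw [(hdp s hs).deriv]
      have habs := hWb s hs.le
      have h1 : W s ≤ CC/s^2 := le_trans (le_abs_self _) habs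
      linarith
  have hplb : ∀ s, R₁ ≤ s → -2 ≤ p s := by
    intro s hs
    have hs0 : (0:ℝ) < s := lt_of_lt_of_le hR10 hs
    have h1 := hw2 s (le_trans hR1rh hs)
    have h2 : -2 ≤ w s := by nlinarith
    have h3 : (0:ℝ) ≤ CC*s⁻¹ := by positivity
    show -2 ≤ w s + CC*s⁻¹
    linarith
  set f : ℝ → ℝ := fun t => p (max t R₁) with hfdef
  have hfanti : Antitone f := by
    intro t1 t2 ht
    exact hpmono (Set.mem_Ici.2 (le_max_right _ _)) (Set.mem_Ici.2 (le_max_right _ _))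
      (max_le_max ht le_rfl)
  have hfbdd : BddBelow (Set.range f) := by
    refine ⟨-2, ?_⟩
    rintro x ⟨t, rfl⟩
    exact hplb _ (le_max_right _ _)
  have hftend := tendsto_atTop_ciInf hfanti hfbdd
  have hptend : Filter.Tendsto p Filter.atTop (nhds (⨅ t, f t)) := by
    apply hftend.congr'
    filter_upwards [eventually_ge_atTop R₁] with t ht
    simp only [hfdef, max_eq_left ht]
  have hwtend : Filter.Tendsto w Filter.atTop (nhds ((⨅ t, f t) - CC*0)) := by
    have h2 : Filter.Tendsto (fun s : ℝ => CC*s⁻¹) Filter.atTop (nhds (CC*0)) :=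
      tendsto_inv_atTop_zero.const_mul CC
    have h3 := hptend.sub h2
    apply h3.congr
    intro s
    show p s - CC*s⁻¹ = w s
    simp only [hpdef]
    ring
  exact ⟨hconc1, ⟨_, hwtend⟩⟩
end

section
/- The derivative of the Yang–Mills potential decays quartically: there exist c > 0 and R > r_h such that w'(r)² ≤ c/r⁴ for all r ≥ R. -/
open Set


private lemma deriv_diffAt' {w : ℝ → ℝ} {r : ℝ} (h : ContDiffAt ℝ 2 w r) :
    DifferentiableAt ℝ (deriv w) r := by
  obtain ⟨u, hu, hcd⟩ := h.contDiffOn le_rfl (by norm_num)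
  obtain ⟨s, hsu, hso, hrs⟩ := mem_nhds_iff.1 hu
  have h1 : ContDiffOn ℝ 1 (deriv w) s :=
    (hcd.mono hsu).deriv_of_isOpen hso (by norm_num)
  exact ((h1.differentiableOn (by norm_num)) r hrs).differentiableAt (hso.mem_nhds hrs)

private lemma monoOn_of_hasDerivAt' {f f' : ℝ → ℝ} {ρ : ℝ}
    (hd : ∀ r ∈ Ici ρ, HasDerivAt f (f' r) r)
    (h0 : ∀ r ∈ Ioi ρ, 0 ≤ f' r) : MonotoneOn f (Ici ρ) := by
  apply monotoneOn_of_deriv_nonneg (convex_Ici ρ)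
  · exact fun r hr => (hd r hr).continuousAt.continuousWithinAt
  · rw [interior_Ici]
    exact fun r hr => ((hd r (mem_Ici.2 (le_of_lt (mem_Ioi.1 hr)))).differentiableAt).differentiableWithinAt
  · rw [interior_Ici]
    intro r hr
    rw [(hd r (mem_Ici.2 (le_of_lt (mem_Ioi.1 hr)))).deriv]
    exact h0 r hr

private lemma antiOn_of_hasDerivAt' {f f' : ℝ → ℝ} {ρ : ℝ}
    (hd : ∀ r ∈ Ici ρ, HasDerivAt f (f' r) r)
    (h0 : ∀ r ∈ Ioi ρ, f' r ≤ 0) : AntitoneOn f (Ici ρ) := by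
  apply antitoneOn_of_deriv_nonpos (convex_Ici ρ)
  · exact fun r hr => (hd r hr).continuousAt.continuousWithinAt
  · rw [interior_Ici]
    exact fun r hr => ((hd r (mem_Ici.2 (le_of_lt (mem_Ioi.1 hr)))).differentiableAt).differentiableWithinAt
  · rw [interior_Ici]
    intro r hr
    rw [(hd r (mem_Ici.2 (le_of_lt (mem_Ioi.1 hr)))).deriv]
    exact h0 r hr

private lemma sign1' (Λ r a b d p q : ℝ) (hr0 : 0 < r) (hΛr : 1 < Λ*r^2) (ha : a < 0)
    (h1 : r*p + 2*a*d^2 = 1 - a - (1-b^2)^2/r^2 - Λ*r^2)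
    (h2 : r^2*a*q + r*(1 - a - (1-b^2)^2/r^2 - Λ*r^2)*d + b*(1-b^2) = 0) :
    (-(p*d^2) - 2*a*d*q)/r + a*d^2/r^2 - 2*b*d*(1-b^2)/r^3 - 3*(1-b^2)^2/(2*r^4) ≤ 0 := by
  have hr' : r ≠ 0 := ne_of_gt hr0
  have ha' : a ≠ 0 := ne_of_lt ha
  have hp : p = (1 - a - (1-b^2)^2/r^2 - Λ*r^2 - 2*a*d^2)/r := by
    rw [eq_div_iff hr']; linear_combination h1
  have hq : q = -((1 - a - (1-b^2)^2/r^2 - Λ*r^2)*r*d + b*(1-b^2))/(r^2*a) := by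
    rw [eq_div_iff (mul_ne_zero (pow_ne_zero 2 hr') ha')]; linear_combination h2
  have key : (-(p*d^2) - 2*a*d*q)/r + a*d^2/r^2 - 2*b*d*(1-b^2)/r^3 - 3*(1-b^2)^2/(2*r^4)
      = (2*d^2*(r^2 - (1-b^2)^2 - Λ*r^4) + 4*a*d^4*r^2 - 3*(1-b^2)^2) / (2*r^4) := by
    rw [hp, hq]; field_simp; ring
  rw [key]
  apply div_nonpos_of_nonpos_of_nonneg _ (by positivity)
  nlinarith [mul_nonneg (mul_nonneg (sq_nonneg d) (sq_nonneg r))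
      (le_of_lt (by linarith : (0:ℝ) < Λ*r^2 - 1)),
    mul_nonneg (sq_nonneg d) (sq_nonneg (1-b^2)), sq_nonneg (1-b^2),
    mul_nonpos_of_nonpos_of_nonneg (le_of_lt ha) (sq_nonneg (d^2*r))]

private lemma signG' (Λ r a b d p Z : ℝ) (hr0 : 0 < r)
    (h1 : r*p + 2*a*d^2 = 1 - a - (1-b^2)^2/r^2 - Λ*r^2)
    (hZ : -a*d^2 ≤ Z*r) :
    0 ≤ -(a + r*p) - Λ*r^2 + 1 + 2*Z*r := by
  have hrp : r*p = 1 - a - (1-b^2)^2/r^2 - Λ*r^2 - 2*a*d^2 := by linarith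
  have h0 : 0 ≤ (1-b^2)^2/r^2 := by positivity
  nlinarith [hrp, hZ, h0]

private lemma signH' (Λ r a b d p Cm : ℝ) (hr0 : 0 < r) (ha : a < 0)
    (h1 : r*p + 2*a*d^2 = 1 - a - (1-b^2)^2/r^2 - Λ*r^2)
    (hu : (1-b^2)^2 ≤ Cm*r^2) :
    0 ≤ Λ*r^2 + Cm + (a + r*p) := by
  have hrp : r*p = 1 - a - (1-b^2)^2/r^2 - Λ*r^2 - 2*a*d^2 := by linarith
  have hu' : (1-b^2)^2/r^2 ≤ Cm := (div_le_iff₀ (by positivity)).2 (by linarith)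
  have had : 0 ≤ (-a)*d^2 := mul_nonneg (by linarith) (sq_nonneg d)
  nlinarith [hrp, hu', had]

private lemma signH2' (Λ r a b d p U : ℝ) (hr0 : 0 < r) (ha : a < 0)
    (h1 : r*p + 2*a*d^2 = 1 - a - (1-b^2)^2/r^2 - Λ*r^2)
    (hu : (1-b^2)^2 ≤ U) :
    0 ≤ Λ*r^2 - 1 + U/r^2 + (a + r*p) := by
  have hrp : r*p = 1 - a - (1-b^2)^2/r^2 - Λ*r^2 - 2*a*d^2 := by linarith
  have hid : U/r^2 - (1-b^2)^2/r^2 = (U - (1-b^2)^2)/r^2 := by ring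
  have h2 : 0 ≤ (U - (1-b^2)^2)/r^2 := div_nonneg (by linarith) (sq_nonneg r)
  have had : 0 ≤ (-a)*d^2 := mul_nonneg (by linarith) (sq_nonneg d)
  nlinarith [hrp, hid, h2, had]

private lemma keyZ2' (Λ r a b d p q : ℝ) (hr0 : 0 < r) (ha : a < 0)
    (h1 : r*p + 2*a*d^2 = 1 - a - (1-b^2)^2/r^2 - Λ*r^2)
    (h2 : r^2*a*q + r*(1 - a - (1-b^2)^2/r^2 - Λ*r^2)*d + b*(1-b^2) = 0) :
    -(p*r^2*d^2) - 2*a*r*d^2 - 2*a*r^2*d*q - 2*b*d*(1-b^2)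
      = r*d^2*(1 - 3*a - (1-b^2)^2/r^2 - Λ*r^2 + 2*a*d^2) := by
  have hr' : r ≠ 0 := ne_of_gt hr0
  have ha' : a ≠ 0 := ne_of_lt ha
  have hp : p = (1 - a - (1-b^2)^2/r^2 - Λ*r^2 - 2*a*d^2)/r := by
    rw [eq_div_iff hr']; linear_combination h1
  have hq : q = -((1 - a - (1-b^2)^2/r^2 - Λ*r^2)*r*d + b*(1-b^2))/(r^2*a) := by
    rw [eq_div_iff (mul_ne_zero (pow_ne_zero 2 hr') ha')]; linear_combination h2
  rw [hp, hq]; field_simp; ring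

private lemma sign6' (Λ r a b d p q C C₂ : ℝ) (hr0 : 0 < r) (ha : a < 0)
    (h1 : r*p + 2*a*d^2 = 1 - a - (1-b^2)^2/r^2 - Λ*r^2)
    (h2 : r^2*a*q + r*(1 - a - (1-b^2)^2/r^2 - Λ*r^2)*d + b*(1-b^2) = 0)
    (hC2 : 0 ≤ C₂) (hrd2 : r*d^2 ≤ C) (hup : -a ≤ Λ*r^2/3 + C₂) :
    -(p*r^2*d^2) - 2*a*r*d^2 - 2*a*r^2*d*q - 2*b*d*(1-b^2) ≤ (1+3*C₂)*C := by
  rw [keyZ2' Λ r a b d p q hr0 ha h1 h2]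
  nlinarith [mul_nonneg (mul_nonneg hr0.le (sq_nonneg d)) (by linarith : 0 ≤ a + Λ*r^2/3 + C₂),
    mul_nonneg (mul_nonneg hr0.le (sq_nonneg d)) (by positivity : (0:ℝ) ≤ (1-b^2)^2/r^2),
    mul_nonneg (neg_nonneg.2 ha.le) (by positivity : (0:ℝ) ≤ r*d^2*d^2),
    mul_nonneg (by linarith : (0:ℝ) ≤ 1 + 3*C₂) (by linarith : 0 ≤ C - r*d^2),
    hrd2, hC2]

private lemma sign9' (Λ r a b d p q : ℝ) (hr0 : 0 < r) (ha : a < 0)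
    (h1 : r*p + 2*a*d^2 = 1 - a - (1-b^2)^2/r^2 - Λ*r^2)
    (h2 : r^2*a*q + r*(1 - a - (1-b^2)^2/r^2 - Λ*r^2)*d + b*(1-b^2) = 0)
    (h3a : -3*a ≤ Λ*r^2 - 1) :
    -(p*r^2*d^2) - 2*a*r*d^2 - 2*a*r^2*d*q - 2*b*d*(1-b^2) ≤ 0 := by
  rw [keyZ2' Λ r a b d p q hr0 ha h1 h2]
  nlinarith [mul_nonneg (mul_nonneg hr0.le (sq_nonneg d)) (by linarith : 0 ≤ Λ*r^2 - 1 + 3*a),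
    mul_nonneg (mul_nonneg hr0.le (sq_nonneg d)) (by positivity : (0:ℝ) ≤ (1-b^2)^2/r^2),
    mul_nonneg (neg_nonneg.2 ha.le) (by positivity : (0:ℝ) ≤ r*d^2*d^2)]

section
variable {A w : ℝ → ℝ} {r : ℝ}

private lemma hdQ1' (hr0 : 0 < r)
    (hAd : HasDerivAt A (deriv A r) r) (hwd : HasDerivAt w (deriv w r) r)
    (hw2d : HasDerivAt (deriv w) (deriv (deriv w) r) r) :
    HasDerivAt (fun s => -A s * (deriv w s)^2 / s + (1 - (w s)^2)^2 / (2*s^3))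
      ((-(deriv A r*(deriv w r)^2) - 2*A r*(deriv w r)*(deriv (deriv w) r))/r
        + A r*(deriv w r)^2/r^2 - 2*(w r)*(deriv w r)*(1-(w r)^2)/r^3
        - 3*(1-(w r)^2)^2/(2*r^4)) r := by
  have h1 := (hAd.neg.mul (hw2d.pow 2)).div (hasDerivAt_id' (x := r)) hr0.ne'
  have h2 := ((((hasDerivAt_const r (1:ℝ)).sub (hwd.pow 2)).pow 2).div
      ((hasDerivAt_pow 3 r).const_mul 2) (by positivity))
  refine (h1.add h2).congr_deriv ?_
  push_cast
  simp only [Pi.pow_apply, Pi.mul_apply, Pi.neg_apply, Pi.sub_apply, Pi.add_apply, Pi.div_apply]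
  field_simp
  ring

private lemma hdG' (Λ Z : ℝ) (hAd : HasDerivAt A (deriv A r) r) :
    HasDerivAt (fun s => -(s*A s) - Λ*s^3/3 + s + Z*s^2)
      (-(A r + r*deriv A r) - Λ*r^2 + 1 + 2*Z*r) r := by
  have h1 := (((hasDerivAt_id' (x := r)).mul hAd).neg.sub
      (((hasDerivAt_pow 3 r).const_mul Λ).div_const 3)).add (hasDerivAt_id' (x := r))
  have h2 := h1.add ((hasDerivAt_pow 2 r).const_mul Z)
  refine h2.congr_deriv ?_
  push_cast
  ring

private lemma hdH' (Λ Cm : ℝ) (hAd : HasDerivAt A (deriv A r) r) :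
    HasDerivAt (fun s => Λ*s^3/3 + Cm*s + s*A s)
      (Λ*r^2 + Cm + (A r + r*deriv A r)) r := by
  have h1 := ((((hasDerivAt_pow 3 r).const_mul Λ).div_const 3).add
      ((hasDerivAt_id' (x := r)).const_mul Cm)).add ((hasDerivAt_id' (x := r)).mul hAd)
  refine h1.congr_deriv ?_
  push_cast
  ring

private lemma hdH2' (Λ U : ℝ) (hr0 : 0 < r) (hAd : HasDerivAt A (deriv A r) r) :
    HasDerivAt (fun s => Λ*s^3/3 - s - U/s + s*A s)
      (Λ*r^2 - 1 + U/r^2 + (A r + r*deriv A r)) r := by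
  have h1 := (((((hasDerivAt_pow 3 r).const_mul Λ).div_const 3).sub
      (hasDerivAt_id' (x := r))).sub
      ((hasDerivAt_const r U).div (hasDerivAt_id' (x := r)) hr0.ne')).add
      ((hasDerivAt_id' (x := r)).mul hAd)
  refine h1.congr_deriv ?_
  push_cast
  field_simp
  ring

private lemma hdZ2' (hAd : HasDerivAt A (deriv A r) r) (hwd : HasDerivAt w (deriv w r) r)
    (hw2d : HasDerivAt (deriv w) (deriv (deriv w) r) r) :
    HasDerivAt (fun s => -A s*s^2*(deriv w s)^2 + (1-(w s)^2)^2/2)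
      (-(deriv A r*r^2*(deriv w r)^2) - 2*A r*r*(deriv w r)^2
        - 2*A r*r^2*(deriv w r)*(deriv (deriv w) r)
        - 2*(w r)*(deriv w r)*(1-(w r)^2)) r := by
  have h1 := ((hAd.neg.mul (hasDerivAt_pow 2 r)).mul (hw2d.pow 2)).add
      ((((hasDerivAt_const r (1:ℝ)).sub (hwd.pow 2)).pow 2).div_const 2)
  refine h1.congr_deriv ?_
  push_cast
  simp only [Pi.pow_apply, Pi.mul_apply, Pi.neg_apply, Pi.sub_apply, Pi.add_apply, Pi.div_apply]
  ring

private lemma hdPsi' (K : ℝ) (hr0 : 0 < r) (hwd : HasDerivAt w (deriv w r) r) :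
    HasDerivAt (fun s => 2*K*Real.sqrt s - w s) (K/Real.sqrt r - deriv w r) r := by
  have hs : Real.sqrt r ≠ 0 := ne_of_gt (Real.sqrt_pos.2 hr0)
  have h1 := ((Real.hasDerivAt_sqrt hr0.ne').const_mul (2*K)).sub hwd
  refine h1.congr_deriv ?_
  field_simp

private lemma hdPsi2' (K : ℝ) (hr0 : 0 < r) (hwd : HasDerivAt w (deriv w r) r) :
    HasDerivAt (fun s => 2*K*Real.sqrt s + w s) (K/Real.sqrt r + deriv w r) r := by
  have hs : Real.sqrt r ≠ 0 := ne_of_gt (Real.sqrt_pos.2 hr0)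
  have h1 := ((Real.hasDerivAt_sqrt hr0.ne').const_mul (2*K)).add hwd
  refine h1.congr_deriv ?_
  field_simp

private lemma hdPhi' (K : ℝ) (hr0 : 0 < r) (hwd : HasDerivAt w (deriv w r) r) :
    HasDerivAt (fun s => w s + 2*K/Real.sqrt s)
      (deriv w r + (0 * Real.sqrt r - 2 * K * (1 / (2 * Real.sqrt r))) / Real.sqrt r ^ 2) r := by
  have hs : Real.sqrt r ≠ 0 := ne_of_gt (Real.sqrt_pos.2 hr0)
  exact hwd.add ((hasDerivAt_const r (2*K)).div (Real.hasDerivAt_sqrt hr0.ne') hs)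

private lemma hdPhi2' (K : ℝ) (hr0 : 0 < r) (hwd : HasDerivAt w (deriv w r) r) :
    HasDerivAt (fun s => w s - 2*K/Real.sqrt s)
      (deriv w r - (0 * Real.sqrt r - 2 * K * (1 / (2 * Real.sqrt r))) / Real.sqrt r ^ 2) r := by
  have hs : Real.sqrt r ≠ 0 := ne_of_gt (Real.sqrt_pos.2 hr0)
  exact hwd.sub ((hasDerivAt_const r (2*K)).div (Real.hasDerivAt_sqrt hr0.ne') hs)

end
set_option maxHeartbeats 2000000

/-- For a globally defined noncompact solution of the static spherically
symmetric Einstein–SU(2) Yang–Mills equations with cosmological constant `Λ`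
extended across its coordinate horizon at `r_h`, the derivative of the
Yang–Mills potential decays quartically: there exist `c > 0` and `R > r_h`
such that `w'(r)² ≤ c/r⁴` for all `r ≥ R`. -/
theorem wprime_quartic_decay
    (Λ r_h : ℝ) (hΛ : 0 < Λ) (hrh : Real.sqrt 2 < r_h) (hΛrh : 1 < Λ * r_h ^ 2)
    (A w : ℝ → ℝ)
    (hA : ∀ r : ℝ, r_h ≤ r → ContDiffAt ℝ 1 A r)
    (hw : ∀ r : ℝ, r_h ≤ r → ContDiffAt ℝ 2 w r)
    (hE1 : ∀ r : ℝ, r_h < r →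
      r * deriv A r + 2 * A r * (deriv w r) ^ 2
        = 1 - A r - (1 - (w r) ^ 2) ^ 2 / r ^ 2 - Λ * r ^ 2)
    (hE2 : ∀ r : ℝ, r_h < r →
      r ^ 2 * A r * deriv (deriv w) r
        + r * (1 - A r - (1 - (w r) ^ 2) ^ 2 / r ^ 2 - Λ * r ^ 2) * deriv w r
        + w r * (1 - (w r) ^ 2) = 0)
    (hArh : A r_h = 0)
    (hAneg : ∀ r : ℝ, r_h < r → A r < 0)
    (hwrh : (1 - (w r_h) ^ 2) ^ 2 < 1) :
    ∃ c > 0, ∃ R > r_h, ∀ r ≥ R, (deriv w r) ^ 2 ≤ c / r ^ 4 := by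
  have h20 : (0:ℝ) < Real.sqrt 2 := Real.sqrt_pos.2 (by norm_num)
  have hrh0 : 0 < r_h := lt_trans h20 hrh
  have hΛr : ∀ r : ℝ, r_h < r → 1 < Λ * r ^ 2 := by
    intro r hr
    nlinarith [mul_nonneg (mul_nonneg hΛ.le (by linarith : (0:ℝ) ≤ r - r_h))
      (by linarith : (0:ℝ) ≤ r + r_h)]
  have hr0 : ∀ r : ℝ, r_h < r → 0 < r := fun r hr => lt_trans hrh0 hr
  have hAd : ∀ r : ℝ, r_h < r → HasDerivAt A (deriv A r) r := fun r hr =>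
    ((hA r hr.le).differentiableAt (by norm_num)).hasDerivAt
  have hwd : ∀ r : ℝ, r_h < r → HasDerivAt w (deriv w r) r := fun r hr =>
    ((hw r hr.le).differentiableAt (by norm_num)).hasDerivAt
  have hw2d : ∀ r : ℝ, r_h < r → HasDerivAt (deriv w) (deriv (deriv w) r) r := fun r hr =>
    (deriv_diffAt' (hw r hr.le)).hasDerivAt
  -- Step 1 : the Lyapunov quantity `-A w'²/r + (1-w²)²/(2r³)` is nonincreasing
  obtain ⟨Z, hZ0, hZb⟩ : ∃ Z : ℝ, 0 ≤ Z ∧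
      ∀ r : ℝ, r_h + 1 ≤ r → -A r * (deriv w r)^2 ≤ Z * r := by
    have hanti : AntitoneOn
        (fun s => -A s * (deriv w s)^2 / s + (1 - (w s)^2)^2 / (2*s^3)) (Ici (r_h+1)) := by
      apply antiOn_of_hasDerivAt' (f' := fun r =>
        (-(deriv A r*(deriv w r)^2) - 2*A r*(deriv w r)*(deriv (deriv w) r))/r
          + A r*(deriv w r)^2/r^2 - 2*(w r)*(deriv w r)*(1-(w r)^2)/r^3
          - 3*(1-(w r)^2)^2/(2*r^4))
      · intro r hr
        have hrh' : r_h < r := by simp only [mem_Ici] at hr; linarith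
        exact hdQ1' (hr0 r hrh') (hAd r hrh') (hwd r hrh') (hw2d r hrh')
      · intro r hr
        have hrh' : r_h < r := by simp only [mem_Ioi] at hr; linarith
        exact sign1' Λ r (A r) (w r) (deriv w r) (deriv A r) (deriv (deriv w) r)
          (hr0 r hrh') (hΛr r hrh') (hAneg r hrh') (hE1 r hrh') (hE2 r hrh')
    have hrh1 : r_h < r_h + 1 := by linarith
    refine ⟨-A (r_h+1) * (deriv w (r_h+1))^2/(r_h+1) + (1-(w (r_h+1))^2)^2/(2*(r_h+1)^3),
      ?_, ?_⟩
    · have hA0 := hAneg (r_h+1) hrh1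
      have h1 : 0 ≤ -A (r_h+1) * (deriv w (r_h+1))^2/(r_h+1) :=
        div_nonneg (mul_nonneg (by linarith) (sq_nonneg _)) (by linarith)
      have h2 : 0 ≤ (1-(w (r_h+1))^2)^2/(2*(r_h+1)^3) :=
        div_nonneg (sq_nonneg _) (by nlinarith [pow_pos (show (0:ℝ) < r_h+1 by linarith) 3])
      linarith
    · intro r hr
      have hrh' : r_h < r := by linarith
      have h : -A r * (deriv w r)^2 / r + (1 - (w r)^2)^2 / (2*r^3)
          ≤ -A (r_h+1) * (deriv w (r_h+1))^2 / (r_h+1)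
            + (1 - (w (r_h+1))^2)^2 / (2*(r_h+1)^3) :=
        hanti self_mem_Ici (mem_Ici.2 hr) hr
      have h2 : 0 ≤ (1-(w r)^2)^2/(2*r^3) :=
        div_nonneg (sq_nonneg _) (by nlinarith [pow_pos (hr0 r hrh') 3])
      have h3 : -A r * (deriv w r)^2 / r
          ≤ -A (r_h+1) * (deriv w (r_h+1))^2/(r_h+1) + (1-(w (r_h+1))^2)^2/(2*(r_h+1)^3) := by
        linarith
      have h4 := mul_le_mul_of_nonneg_right h3 (hr0 r hrh').le
      have h5 : -A r * (deriv w r)^2 / r * r = -A r * (deriv w r)^2 :=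
        div_mul_cancel₀ _ (ne_of_gt (hr0 r hrh'))
      linarith [h4, h5.symm.le, h5.le]
  -- Step 2 : quadratic lower bound for -A
  obtain ⟨R₁, hR₁r₀, hR₁1, hΦlow⟩ : ∃ R₁ : ℝ, (r_h + 2 ≤ R₁) ∧ (1 ≤ R₁) ∧
      ∀ r : ℝ, R₁ ≤ r → Λ/6*r^2 ≤ -A r := by
    have hmono : MonotoneOn (fun s => -(s*A s) - Λ*s^3/3 + s + Z*s^2) (Ici (r_h+1)) := by
      apply monoOn_of_hasDerivAt' (f' := fun r => -(A r + r*deriv A r) - Λ*r^2 + 1 + 2*Z*r)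
      · intro r hr
        have hrh' : r_h < r := by simp only [mem_Ici] at hr; linarith
        exact hdG' Λ Z (hAd r hrh')
      · intro r hr
        have hrh' : r_h < r := by simp only [mem_Ioi] at hr; linarith
        have hr₁ : r_h + 1 ≤ r := le_of_lt hr
        exact signG' Λ r (A r) (w r) (deriv w r) (deriv A r) Z (hr0 r hrh')
          (hE1 r hrh') (hZb r hr₁)
    obtain ⟨g₀, hg₀⟩ : ∃ g : ℝ, g = -((r_h+1)*A (r_h+1)) - Λ*(r_h+1)^3/3 + (r_h+1) + Z*(r_h+1)^2 :=
      ⟨_, rfl⟩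
    refine ⟨max (r_h + 2) ((6/Λ)*(1 + |g₀| + Z) + 1), le_max_left _ _, ?_, ?_⟩
    · have h1 : (1:ℝ) ≤ r_h + 2 := by linarith
      exact le_trans h1 (le_max_left _ _)
    · intro r hr
      have hr₀r : r_h + 1 ≤ r := by
        have := le_trans (le_max_left _ _) hr; linarith
      have hrh' : r_h < r := by linarith
      have hr1 : 1 ≤ r := by linarith [hrh0]
      have h6 : 6*(1 + |g₀| + Z) ≤ Λ*r := by
        have h := le_trans (le_max_right _ _) hr
        have h' : (6/Λ)*(1 + |g₀| + Z) ≤ r := by linarith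
        rw [div_mul_eq_mul_div, div_le_iff₀ hΛ] at h'
        nlinarith [h']
      have hG : g₀ ≤ -(r*A r) - Λ*r^3/3 + r + Z*r^2 := by
        rw [hg₀]; exact hmono self_mem_Ici (mem_Ici.2 hr₀r) hr₀r
      have habs : -|g₀| ≤ g₀ := neg_abs_le g₀
      have h6r : 6*(1 + |g₀| + Z)*r^2 ≤ Λ*r*r^2 := mul_le_mul_of_nonneg_right h6 (sq_nonneg r)
      have hr2 : 1 ≤ r^2 := by nlinarith
      have hrr : r ≤ r^2 := by nlinarith
      have hgr : |g₀| ≤ |g₀| * r^2 := le_mul_of_one_le_right (abs_nonneg _) hr2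
      have hkey : Λ/6*r^2*r ≤ -A r*r := by linarith [hG, habs, h6r, hgr, hrr]
      nlinarith [hkey, hr0 r hrh']
  have hR₁rh : r_h < R₁ := by linarith
  have hR₁0 : 0 < R₁ := by linarith
  -- Step 3 : w'² ≤ C/r
  obtain ⟨C, hC0, hCb⟩ : ∃ C : ℝ, 0 ≤ C ∧ ∀ r : ℝ, R₁ ≤ r → r*(deriv w r)^2 ≤ C := by
    refine ⟨6*Z/Λ, by positivity, fun r hr => ?_⟩
    have hrh' : r_h < r := by linarith
    have h1 := hZb r (by linarith)
    have h2 := hΦlow r hr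
    have h3 : Λ/6*r^2*(deriv w r)^2 ≤ Z*r :=
      le_trans (mul_le_mul_of_nonneg_right h2 (sq_nonneg _)) h1
    rw [le_div_iff₀ hΛ]
    nlinarith [h3, hr0 r hrh']
  -- Step 4 : (1-w²)² ≤ Cm r²
  obtain ⟨Cm, hCm0, hCmb⟩ : ∃ Cm : ℝ, 0 ≤ Cm ∧
      ∀ r : ℝ, R₁ ≤ r → (1-(w r)^2)^2 ≤ Cm*r^2 := by
    obtain ⟨K, hK⟩ : ∃ k : ℝ, k = C + 1 := ⟨_, rfl⟩
    have hK1 : 1 ≤ K := by rw [hK]; linarith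
    have hdb : ∀ r : ℝ, R₁ ≤ r → deriv w r * Real.sqrt r ≤ K ∧ -K ≤ deriv w r * Real.sqrt r := by
      intro r hr
      have hrh' : r_h < r := by linarith
      have hs2 : Real.sqrt r^2 = r := Real.sq_sqrt (hr0 r hrh').le
      have hc2 : Real.sqrt r^2*(deriv w r)^2 ≤ C := by rw [hs2]; exact hCb r hr
      constructor
      · nlinarith [sq_nonneg (deriv w r*Real.sqrt r - K), hc2, hC0, hK]
      · nlinarith [sq_nonneg (deriv w r*Real.sqrt r + K), hc2, hC0, hK]
    have hpsi : MonotoneOn (fun s => 2*K*Real.sqrt s - w s) (Ici R₁) := by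
      apply monoOn_of_hasDerivAt' (f' := fun r => K/Real.sqrt r - deriv w r)
      · intro r hr
        have hrh' : r_h < r := by simp only [mem_Ici] at hr; linarith
        exact hdPsi' K (hr0 r hrh') (hwd r hrh')
      · intro r hr
        simp only [mem_Ioi] at hr
        have hrh' : r_h < r := by linarith
        have hs0 : 0 < Real.sqrt r := Real.sqrt_pos.2 (hr0 r hrh')
        have h1 : deriv w r ≤ K / Real.sqrt r := (le_div_iff₀ hs0).2 (hdb r hr.le).1
        show 0 ≤ K/Real.sqrt r - deriv w r
        linarith
    have hpsi2 : MonotoneOn (fun s => 2*K*Real.sqrt s + w s) (Ici R₁) := by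
      apply monoOn_of_hasDerivAt' (f' := fun r => K/Real.sqrt r + deriv w r)
      · intro r hr
        have hrh' : r_h < r := by simp only [mem_Ici] at hr; linarith
        exact hdPsi2' K (hr0 r hrh') (hwd r hrh')
      · intro r hr
        simp only [mem_Ioi] at hr
        have hrh' : r_h < r := by linarith
        have hs0 : 0 < Real.sqrt r := Real.sqrt_pos.2 (hr0 r hrh')
        have h1 : -(deriv w r) ≤ K / Real.sqrt r := by
          rw [le_div_iff₀ hs0]
          have := (hdb r hr.le).2
          linarith
        show 0 ≤ K/Real.sqrt r + deriv w r
        linarith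
    refine ⟨(2*(w R₁)^2 + 8*K^2 + 1)^2, by positivity, fun r hr => ?_⟩
    have hrh' : r_h < r := by linarith
    have hr1 : 1 ≤ r := le_trans hR₁1 hr
    have hplus : 2*K*Real.sqrt R₁ - w R₁ ≤ 2*K*Real.sqrt r - w r :=
      hpsi self_mem_Ici (mem_Ici.2 hr) hr
    have hminus : 2*K*Real.sqrt R₁ + w R₁ ≤ 2*K*Real.sqrt r + w r :=
      hpsi2 self_mem_Ici (mem_Ici.2 hr) hr
    have hsR : 0 ≤ Real.sqrt R₁ := Real.sqrt_nonneg _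
    have hs2 : Real.sqrt r^2 = r := Real.sq_sqrt (hr0 r hrh').le
    have hs0 : 0 ≤ Real.sqrt r := Real.sqrt_nonneg r
    have haR : w R₁ ≤ |w R₁| := le_abs_self _
    have haR' : -|w R₁| ≤ w R₁ := neg_abs_le _
    have hwup : w r ≤ |w R₁| + 2*K*Real.sqrt r := by nlinarith [hplus, hsR, hK1]
    have hwdn : -(|w R₁| + 2*K*Real.sqrt r) ≤ w r := by nlinarith [hminus, hsR, hK1]
    have hw2 : (w r)^2 ≤ (|w R₁| + 2*K*Real.sqrt r)^2 := sq_le_sq' hwdn hwup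
    have hw2' : (w r)^2 ≤ 2*(w R₁)^2 + 8*K^2*r := by
      nlinarith [hw2, sq_nonneg (|w R₁| - 2*K*Real.sqrt r), hs2, sq_abs (w R₁), hs0]
    have hMw : (w r)^2 ≤ (2*(w R₁)^2 + 8*K^2)*r := by
      nlinarith [hw2', hr1, sq_nonneg (w R₁), sq_nonneg K]
    have hcoef : (1:ℝ) ≤ 2*(w R₁)^2 + 8*K^2 + 1 := by nlinarith [sq_nonneg (w R₁), sq_nonneg K]
    have hup : 1 - (w r)^2 ≤ (2*(w R₁)^2 + 8*K^2 + 1)*r := by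
      nlinarith [sq_nonneg (w r), hr1, hcoef]
    have hdn : -((2*(w R₁)^2 + 8*K^2 + 1)*r) ≤ 1 - (w r)^2 := by
      nlinarith [hMw, hr1]
    have hsq := sq_le_sq' hdn hup
    calc (1-(w r)^2)^2 ≤ ((2*(w R₁)^2 + 8*K^2 + 1)*r)^2 := hsq
      _ = (2*(w R₁)^2 + 8*K^2 + 1)^2*r^2 := by ring
  -- Step 5 : upper bound for -A
  obtain ⟨C₂, hC₂0, hC₂b⟩ : ∃ C₂ : ℝ, 0 ≤ C₂ ∧
      ∀ r : ℝ, R₁ ≤ r → -A r ≤ Λ*r^2/3 + C₂ := by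
    have hmono : MonotoneOn (fun s => Λ*s^3/3 + Cm*s + s*A s) (Ici R₁) := by
      apply monoOn_of_hasDerivAt' (f' := fun r => Λ*r^2 + Cm + (A r + r*deriv A r))
      · intro r hr
        have hrh' : r_h < r := by simp only [mem_Ici] at hr; linarith
        exact hdH' Λ Cm (hAd r hrh')
      · intro r hr
        simp only [mem_Ioi] at hr
        have hrh' : r_h < r := by linarith
        exact signH' Λ r (A r) (w r) (deriv w r) (deriv A r) Cm (hr0 r hrh')
          (hAneg r hrh') (hE1 r hrh') (hCmb r hr.le)
    obtain ⟨h₀, hh₀⟩ : ∃ h : ℝ, h = Λ*R₁^3/3 + Cm*R₁ + R₁*A R₁ := ⟨_, rfl⟩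
    refine ⟨Cm + |h₀|, by positivity, fun r hr => ?_⟩
    have hrh' : r_h < r := by linarith
    have hr1 : 1 ≤ r := le_trans hR₁1 hr
    have hH : h₀ ≤ Λ*r^3/3 + Cm*r + r*A r := by
      rw [hh₀]; exact hmono self_mem_Ici (mem_Ici.2 hr) hr
    have habs : -|h₀| ≤ h₀ := neg_abs_le _
    have hgr : |h₀| ≤ |h₀| * r := le_mul_of_one_le_right (abs_nonneg _) hr1
    have hkey : (-A r)*r ≤ (Λ*r^2/3 + Cm + |h₀|)*r := by nlinarith [hH, habs, hgr]
    nlinarith [hkey, hr0 r hrh']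
  -- Step 6 : w'² ≤ C₄/r³
  obtain ⟨C₄, hC₄0, hC₄b⟩ : ∃ C₄ : ℝ, 0 ≤ C₄ ∧
      ∀ r : ℝ, R₁ ≤ r → r^3*(deriv w r)^2 ≤ C₄ := by
    obtain ⟨M₂, hM₂⟩ : ∃ m : ℝ, m = (1+3*C₂)*C := ⟨_, rfl⟩
    have hM₂0 : 0 ≤ M₂ := by rw [hM₂]; exact mul_nonneg (by linarith) hC0
    have hanti : AntitoneOn
        (fun s => -A s*s^2*(deriv w s)^2 + (1-(w s)^2)^2/2 - M₂*s) (Ici R₁) := by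
      apply antiOn_of_hasDerivAt' (f' := fun r =>
        -(deriv A r*r^2*(deriv w r)^2) - 2*A r*r*(deriv w r)^2
          - 2*A r*r^2*(deriv w r)*(deriv (deriv w) r)
          - 2*(w r)*(deriv w r)*(1-(w r)^2) - M₂)
      · intro r hr
        have hrh' : r_h < r := by simp only [mem_Ici] at hr; linarith
        have h1 := (hdZ2' (hAd r hrh') (hwd r hrh') (hw2d r hrh')).sub
          ((hasDerivAt_id' (x := r)).const_mul M₂)
        refine h1.congr_deriv ?_
        ring
      · intro r hr
        simp only [mem_Ioi] at hr
        have hrh' : r_h < r := by linarith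
        have h6 := sign6' Λ r (A r) (w r) (deriv w r) (deriv A r) (deriv (deriv w) r) C C₂
          (hr0 r hrh') (hAneg r hrh') (hE1 r hrh') (hE2 r hrh') hC₂0
          (hCb r hr.le) (hC₂b r hr.le)
        show -(deriv A r*r^2*(deriv w r)^2) - 2*A r*r*(deriv w r)^2
          - 2*A r*r^2*(deriv w r)*(deriv (deriv w) r)
          - 2*(w r)*(deriv w r)*(1-(w r)^2) - M₂ ≤ 0
        rw [hM₂]
        linarith [h6]
    obtain ⟨F₁, hF₁⟩ : ∃ f : ℝ, f = -A R₁*R₁^2*(deriv w R₁)^2 + (1-(w R₁)^2)^2/2 := ⟨_, rfl⟩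
    refine ⟨6*(|F₁| + M₂)/Λ, by positivity, fun r hr => ?_⟩
    have hrh' : r_h < r := by linarith
    have hr1 : 1 ≤ r := le_trans hR₁1 hr
    have hZ2r : -A r*r^2*(deriv w r)^2 + (1-(w r)^2)^2/2 - M₂*r ≤ F₁ - M₂*R₁ := by
      rw [hF₁]; exact hanti self_mem_Ici (mem_Ici.2 hr) hr
    have hu : 0 ≤ (1-(w r)^2)^2/2 := by positivity
    have h3 : 0 ≤ M₂*R₁ := mul_nonneg hM₂0 (by linarith)
    have h4 : F₁ ≤ |F₁| := le_abs_self _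
    have h5 : |F₁| ≤ |F₁| * r := le_mul_of_one_le_right (abs_nonneg _) hr1
    have hM₂r : M₂*1 ≤ M₂*r := mul_le_mul_of_nonneg_left hr1 hM₂0
    have h2 : -A r*r^2*(deriv w r)^2 ≤ (|F₁| + M₂)*r := by nlinarith [hZ2r, hu, h3, h4, h5]
    have hred := hΦlow r hr
    rw [le_div_iff₀ hΛ]
    nlinarith [h2, hr0 r hrh',
      mul_le_mul_of_nonneg_right hred (by positivity : (0:ℝ) ≤ r^2*(deriv w r)^2)]
  -- Step 7 : w bounded, hence (1-w²)² ≤ U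
  obtain ⟨U, hU0, hUb⟩ : ∃ U : ℝ, 0 ≤ U ∧
      ∀ r : ℝ, R₁ ≤ r → (1-(w r)^2)^2 ≤ U := by
    obtain ⟨K₂, hK₂⟩ : ∃ k : ℝ, k = C₄ + 1 := ⟨_, rfl⟩
    have hK₂1 : 1 ≤ K₂ := by rw [hK₂]; linarith
    have hdb3 : ∀ r : ℝ, R₁ ≤ r →
        deriv w r * Real.sqrt r^3 ≤ K₂ ∧ -K₂ ≤ deriv w r * Real.sqrt r^3 := by
      intro r hr
      have hrh' : r_h < r := by linarith
      have hs2 : Real.sqrt r^2 = r := Real.sq_sqrt (hr0 r hrh').le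
      have hc6 : Real.sqrt r^6*(deriv w r)^2 ≤ C₄ := by
        have e : Real.sqrt r^6 = (Real.sqrt r^2)^3 := by ring
        rw [e, hs2]; exact hC₄b r hr
      constructor
      · nlinarith [sq_nonneg (deriv w r*Real.sqrt r^3 - K₂), hc6, hC₄0, hK₂]
      · nlinarith [sq_nonneg (deriv w r*Real.sqrt r^3 + K₂), hc6, hC₄0, hK₂]
    have hphi : AntitoneOn (fun s => w s + 2*K₂/Real.sqrt s) (Ici R₁) := by
      apply antiOn_of_hasDerivAt' (f' := fun r => deriv w r
        + (0 * Real.sqrt r - 2 * K₂ * (1 / (2 * Real.sqrt r))) / Real.sqrt r ^ 2)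
      · intro r hr
        have hrh' : r_h < r := by simp only [mem_Ici] at hr; linarith
        exact hdPhi' K₂ (hr0 r hrh') (hwd r hrh')
      · intro r hr
        simp only [mem_Ioi] at hr
        have hrh' : r_h < r := by linarith
        have hs0 : 0 < Real.sqrt r := Real.sqrt_pos.2 (hr0 r hrh')
        have heq : (0 * Real.sqrt r - 2 * K₂ * (1 / (2 * Real.sqrt r))) / Real.sqrt r ^ 2
            = -(K₂/Real.sqrt r^3) := by
          rw [zero_mul, zero_sub, neg_div, neg_inj, mul_one_div, div_div,
            div_eq_div_iff (by positivity) (by positivity)]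
          ring
        show deriv w r
          + (0 * Real.sqrt r - 2 * K₂ * (1 / (2 * Real.sqrt r))) / Real.sqrt r ^ 2 ≤ 0
        rw [heq]
        have h1 : deriv w r ≤ K₂ / Real.sqrt r^3 :=
          (le_div_iff₀ (by positivity)).2 (hdb3 r hr.le).1
        linarith
    have hphi2 : MonotoneOn (fun s => w s - 2*K₂/Real.sqrt s) (Ici R₁) := by
      apply monoOn_of_hasDerivAt' (f' := fun r => deriv w r
        - (0 * Real.sqrt r - 2 * K₂ * (1 / (2 * Real.sqrt r))) / Real.sqrt r ^ 2)
      · intro r hr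
        have hrh' : r_h < r := by simp only [mem_Ici] at hr; linarith
        exact hdPhi2' K₂ (hr0 r hrh') (hwd r hrh')
      · intro r hr
        simp only [mem_Ioi] at hr
        have hrh' : r_h < r := by linarith
        have hs0 : 0 < Real.sqrt r := Real.sqrt_pos.2 (hr0 r hrh')
        have heq : (0 * Real.sqrt r - 2 * K₂ * (1 / (2 * Real.sqrt r))) / Real.sqrt r ^ 2
            = -(K₂/Real.sqrt r^3) := by
          rw [zero_mul, zero_sub, neg_div, neg_inj, mul_one_div, div_div,
            div_eq_div_iff (by positivity) (by positivity)]
          ring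
        show 0 ≤ deriv w r
          - (0 * Real.sqrt r - 2 * K₂ * (1 / (2 * Real.sqrt r))) / Real.sqrt r ^ 2
        rw [heq]
        have h1 : -(K₂ / Real.sqrt r^3) ≤ deriv w r := by
          have h2 := (hdb3 r hr.le).2
          have h3 : -K₂ / Real.sqrt r^3 ≤ deriv w r := by
            rw [div_le_iff₀ (by positivity : (0:ℝ) < Real.sqrt r^3)]
            linarith
          rw [neg_div] at h3
          exact h3
        linarith
    obtain ⟨B, hB⟩ : ∃ b : ℝ, b = |w R₁| + 2*K₂/Real.sqrt R₁ := ⟨_, rfl⟩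
    have hsR0 : 0 < Real.sqrt R₁ := Real.sqrt_pos.2 hR₁0
    refine ⟨(1 + B^2)^2, by positivity, fun r hr => ?_⟩
    have hrh' : r_h < r := by linarith
    have hs0 : 0 < Real.sqrt r := Real.sqrt_pos.2 (hr0 r hrh')
    have hq0 : 0 ≤ 2*K₂/Real.sqrt r := div_nonneg (by linarith) hs0.le
    have hq0R : 0 ≤ 2*K₂/Real.sqrt R₁ := div_nonneg (by linarith) hsR0.le
    have hup : w r + 2*K₂/Real.sqrt r ≤ w R₁ + 2*K₂/Real.sqrt R₁ :=
      hphi self_mem_Ici (mem_Ici.2 hr) hr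
    have hdn : w R₁ - 2*K₂/Real.sqrt R₁ ≤ w r - 2*K₂/Real.sqrt r :=
      hphi2 self_mem_Ici (mem_Ici.2 hr) hr
    have hwu : w r ≤ B := by rw [hB]; have := le_abs_self (w R₁); linarith
    have hwd' : -B ≤ w r := by rw [hB]; have := neg_abs_le (w R₁); linarith
    have hw2 : (w r)^2 ≤ B^2 := sq_le_sq' hwd' hwu
    have hg1 : 1 - (w r)^2 ≤ 1 + B^2 := by nlinarith [sq_nonneg (w r)]
    have hg2 : -(1 + B^2) ≤ 1 - (w r)^2 := by nlinarith [hw2]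
    exact sq_le_sq' hg2 hg1
  -- Step 8 : sharp upper bound 3(-A) ≤ Λr² - 1 beyond R₂
  obtain ⟨R₂, hR₂R₁, h3ab⟩ : ∃ R₂ : ℝ, R₁ ≤ R₂ ∧
      ∀ r : ℝ, R₂ ≤ r → -3*A r ≤ Λ*r^2 - 1 := by
    have hmono : MonotoneOn (fun s => Λ*s^3/3 - s - U/s + s*A s) (Ici R₁) := by
      apply monoOn_of_hasDerivAt' (f' := fun r => Λ*r^2 - 1 + U/r^2 + (A r + r*deriv A r))
      · intro r hr
        have hrh' : r_h < r := by simp only [mem_Ici] at hr; linarith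
        exact hdH2' Λ U (hr0 r hrh') (hAd r hrh')
      · intro r hr
        simp only [mem_Ioi] at hr
        have hrh' : r_h < r := by linarith
        exact signH2' Λ r (A r) (w r) (deriv w r) (deriv A r) U (hr0 r hrh')
          (hAneg r hrh') (hE1 r hrh') (hUb r hr.le)
    obtain ⟨K₃, hK₃⟩ : ∃ k : ℝ, k = |Λ*R₁^3/3 - R₁ - U/R₁ + R₁*A R₁| := ⟨_, rfl⟩
    refine ⟨max R₁ (3*K₃/2 + 1), le_max_left _ _, fun r hr => ?_⟩
    have hrR₁ : R₁ ≤ r := le_trans (le_max_left _ _) hr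
    have hrh' : r_h < r := by linarith
    have hK₃r : 3*K₃ ≤ 2*r - 2 := by
      have := le_trans (le_max_right _ _) hr; linarith
    have hH2 : Λ*R₁^3/3 - R₁ - U/R₁ + R₁*A R₁ ≤ Λ*r^3/3 - r - U/r + r*A r :=
      hmono self_mem_Ici (mem_Ici.2 hrR₁) hrR₁
    have hUr : 0 ≤ U/r := div_nonneg hU0 (hr0 r hrh').le
    have habs : -K₃ ≤ Λ*R₁^3/3 - R₁ - U/R₁ + R₁*A R₁ := by rw [hK₃]; exact neg_abs_le _
    have hkey : (-3*A r)*r ≤ (Λ*r^2 - 1)*r := by linarith [hH2, hUr, habs, hK₃r]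
    nlinarith [hkey, hr0 r hrh']
  -- Step 9 : conclusion
  have hR₂rh : r_h < R₂ := by linarith
  have hanti9 : AntitoneOn
      (fun s => -A s*s^2*(deriv w s)^2 + (1-(w s)^2)^2/2) (Ici R₂) := by
    apply antiOn_of_hasDerivAt' (f' := fun r =>
      -(deriv A r*r^2*(deriv w r)^2) - 2*A r*r*(deriv w r)^2
        - 2*A r*r^2*(deriv w r)*(deriv (deriv w) r) - 2*(w r)*(deriv w r)*(1-(w r)^2))
    · intro r hr
      have hrh' : r_h < r := by simp only [mem_Ici] at hr; linarith
      exact hdZ2' (hAd r hrh') (hwd r hrh') (hw2d r hrh')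
    · intro r hr
      simp only [mem_Ioi] at hr
      have hrh' : r_h < r := by linarith
      exact sign9' Λ r (A r) (w r) (deriv w r) (deriv A r) (deriv (deriv w) r)
        (hr0 r hrh') (hAneg r hrh') (hE1 r hrh') (hE2 r hrh') (h3ab r hr.le)
  obtain ⟨F, hF⟩ : ∃ f : ℝ, f = -A R₂*R₂^2*(deriv w R₂)^2 + (1-(w R₂)^2)^2/2 := ⟨_, rfl⟩
  have hF0 : 0 ≤ F := by
    rw [hF]
    have h1 := hAneg R₂ hR₂rh
    have h2 : 0 ≤ -A R₂*R₂^2*(deriv w R₂)^2 :=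
      mul_nonneg (mul_nonneg (by linarith) (sq_nonneg _)) (sq_nonneg _)
    have h3 : 0 ≤ (1-(w R₂)^2)^2/2 := by positivity
    linarith
  have hc0 : 0 < 6*F/Λ + 1 := by
    have : 0 ≤ 6*F/Λ := div_nonneg (by linarith) hΛ.le
    linarith
  refine ⟨6*F/Λ + 1, hc0, R₂, by linarith, fun r hr => ?_⟩
  have hrh' : r_h < r := lt_of_lt_of_le hR₂rh hr
  have hZle : -A r*r^2*(deriv w r)^2 + (1-(w r)^2)^2/2 ≤ F := by
    rw [hF]; exact hanti9 self_mem_Ici (mem_Ici.2 hr) hr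
  have hu9 : 0 ≤ (1-(w r)^2)^2/2 := by positivity
  have h1 : -A r*r^2*(deriv w r)^2 ≤ F := by linarith
  have h2 := hΦlow r (le_trans hR₂R₁ hr)
  have h3 : Λ*(r^4*(deriv w r)^2) ≤ 6*F := by
    nlinarith [mul_le_mul_of_nonneg_right h2
      (by positivity : (0:ℝ) ≤ r^2*(deriv w r)^2), h1]
  have h4 : r^4*(deriv w r)^2 ≤ 6*F/Λ := (le_div_iff₀ hΛ).2 (by linarith)
  rw [le_div_iff₀ (pow_pos (hr0 r hrh') 4)]
  linarith [h4]
end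

section
/- The remaining metric coefficient converges: the limit of C(r) as r → ∞ exists and is finite. -/
open Filter Set

set_option maxHeartbeats 2000000

private lemma aux_deriv2 {f : ℝ → ℝ} {x : ℝ} (h : ContDiffAt ℝ 2 f x) :
    DifferentiableAt ℝ (deriv f) x ∧ ContinuousAt (deriv f) x := by
  obtain ⟨u, hu, hcd⟩ := h.contDiffOn (le_refl 2) (by simp)
  obtain ⟨v, hvu, hvo, hxv⟩ := mem_nhds_iff.mp hu
  have hcd2 : ContDiffOn ℝ 2 f v := hcd.mono hvu
  have h2 : ContDiffOn ℝ 1 (deriv f) v := by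
    have h11 : ContDiffOn ℝ ((1:WithTop ℕ∞) + 1) f v := by
      convert hcd2 using 2
      exact one_add_one_eq_two
    exact ((contDiffOn_succ_iff_deriv_of_isOpen hvo).mp h11).2.2
  have hca : ContDiffAt ℝ 1 (deriv f) x := h2.contDiffAt (hvo.mem_nhds hxv)
  exact ⟨hca.differentiableAt (by norm_num), hca.continuousAt⟩

private noncomputable def phiEYM (Λ : ℝ) (A : ℝ → ℝ) (r : ℝ) : ℝ :=
  -(r * A r) - (Λ * r ^ 3 - r) / 3

private noncomputable def etaEYM (Λ : ℝ) (A : ℝ → ℝ) (r : ℝ) : ℝ :=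
  -(r * A r) - (Λ * r ^ 3 / 3 - 3 / 2 * r)

private noncomputable def QEYM (A w : ℝ → ℝ) (r : ℝ) : ℝ :=
  -(r ^ 2 * A r * (deriv w r) ^ 2) + (1 - (w r) ^ 2) ^ 2 / 2

section helpers

variable {Λ : ℝ} {A w : ℝ → ℝ} {x : ℝ}

private lemma phi_hasDeriv (hAd : DifferentiableAt ℝ A x)
    (e1 : x * deriv A x + 2 * A x * (deriv w x) ^ 2
      = 1 - A x - (1 - (w x) ^ 2) ^ 2 / x ^ 2 - Λ * x ^ 2) :
    HasDerivAt (phiEYM Λ A)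
      ((1 - (w x) ^ 2) ^ 2 / x ^ 2 - 2 / 3 + 2 * A x * (deriv w x) ^ 2) x := by
  have h1 : HasDerivAt (fun r => r * A r) (1 * A x + x * deriv A x) x :=
    (hasDerivAt_id x).mul hAd.hasDerivAt
  have h2 : HasDerivAt (fun r => (Λ * r ^ 3 - r) / 3)
      ((Λ * (↑(3:ℕ) * x ^ (3 - 1)) - 1) / 3) x :=
    (((hasDerivAt_pow 3 x).const_mul Λ).sub (hasDerivAt_id x)).div_const 3
  have H := h1.neg.sub h2
  have H' : HasDerivAt (phiEYM Λ A)
      (-(1 * A x + x * deriv A x) - (Λ * (↑(3:ℕ) * x ^ (3 - 1)) - 1) / 3) x := H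
  convert H' using 1
  push_cast
  linear_combination e1

private lemma eta_hasDeriv (hAd : DifferentiableAt ℝ A x)
    (e1 : x * deriv A x + 2 * A x * (deriv w x) ^ 2
      = 1 - A x - (1 - (w x) ^ 2) ^ 2 / x ^ 2 - Λ * x ^ 2) :
    HasDerivAt (etaEYM Λ A)
      ((1 - (w x) ^ 2) ^ 2 / x ^ 2 + 2 * A x * (deriv w x) ^ 2 + 1 / 2) x := by
  have h1 : HasDerivAt (fun r => r * A r) (1 * A x + x * deriv A x) x :=
    (hasDerivAt_id x).mul hAd.hasDerivAt
  have h2 : HasDerivAt (fun r => Λ * r ^ 3 / 3 - 3 / 2 * r)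
      (Λ * (↑(3:ℕ) * x ^ (3 - 1)) / 3 - 3 / 2 * 1) x :=
    (((hasDerivAt_pow 3 x).const_mul Λ).div_const 3).sub ((hasDerivAt_id x).const_mul (3 / 2))
  have H := h1.neg.sub h2
  have H' : HasDerivAt (etaEYM Λ A)
      (-(1 * A x + x * deriv A x) - (Λ * (↑(3:ℕ) * x ^ (3 - 1)) / 3 - 3 / 2 * 1)) x := H
  convert H' using 1
  push_cast
  linear_combination e1

private lemma Q_hasDeriv (hAd : DifferentiableAt ℝ A x) (hwd : DifferentiableAt ℝ w x)
    (hw1d : DifferentiableAt ℝ (deriv w) x)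
    (e1 : x * deriv A x + 2 * A x * (deriv w x) ^ 2
      = 1 - A x - (1 - (w x) ^ 2) ^ 2 / x ^ 2 - Λ * x ^ 2)
    (e2 : x ^ 2 * A x * deriv (deriv w) x
        + x * (1 - A x - (1 - (w x) ^ 2) ^ 2 / x ^ 2 - Λ * x ^ 2) * deriv w x
        + w x * (1 - (w x) ^ 2) = 0) :
    HasDerivAt (QEYM A w)
      (3 * phiEYM Λ A x * (deriv w x) ^ 2
        - (1 - (w x) ^ 2) ^ 2 / x ^ 2 * (x * (deriv w x) ^ 2)
        + 2 * x * A x * (deriv w x) ^ 4) x := by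
  have h1 : HasDerivAt (fun r => r ^ 2 * A r * (deriv w r) ^ 2)
      (((↑(2:ℕ) * x ^ (2 - 1)) * A x + x ^ 2 * deriv A x) * (deriv w x) ^ 2
        + x ^ 2 * A x * (↑(2:ℕ) * (deriv w x) ^ (2 - 1) * deriv (deriv w) x)) x :=
    ((hasDerivAt_pow 2 x).mul hAd.hasDerivAt).mul (hw1d.hasDerivAt.pow 2)
  have h2 : HasDerivAt (fun r => (1 - (w r) ^ 2) ^ 2 / 2)
      ((↑(2:ℕ) * (1 - (w x) ^ 2) ^ (2 - 1)
        * (0 - ↑(2:ℕ) * (w x) ^ (2 - 1) * deriv w x)) / 2) x :=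
    (((hasDerivAt_const x 1).sub (hwd.hasDerivAt.pow 2)).pow 2).div_const 2
  have H := h1.neg.add h2
  have H' : HasDerivAt (QEYM A w)
      (-(((↑(2:ℕ) * x ^ (2 - 1)) * A x + x ^ 2 * deriv A x) * (deriv w x) ^ 2
          + x ^ 2 * A x * (↑(2:ℕ) * (deriv w x) ^ (2 - 1) * deriv (deriv w) x))
        + (↑(2:ℕ) * (1 - (w x) ^ 2) ^ (2 - 1)
            * (0 - ↑(2:ℕ) * (w x) ^ (2 - 1) * deriv w x)) / 2) x := H
  convert H' using 1
  simp only [phiEYM]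
  push_cast
  linear_combination (x * (deriv w x) ^ 2) * e1 + (2 * deriv w x) * e2

end helpers

/-- For a globally defined noncompact solution of the static spherically
symmetric Einstein–SU(2) Yang–Mills equations with cosmological constant `Λ`
extended across its coordinate horizon at `r_h`, with third metric coefficient
`C > 0` satisfying `r C'(r) = 2 w'(r)² C(r)`, the limit of `C(r)` as `r → ∞`
exists and is finite. -/
theorem C_converges
    (Λ r_h : ℝ) (hΛ : 0 < Λ) (hrh : Real.sqrt 2 < r_h) (hΛrh : 1 < Λ * r_h ^ 2)
    (A w C : ℝ → ℝ)
    (hA : ∀ r : ℝ, r_h ≤ r → ContDiffAt ℝ 1 A r)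
    (hw : ∀ r : ℝ, r_h ≤ r → ContDiffAt ℝ 2 w r)
    (hE1 : ∀ r : ℝ, r_h < r →
      r * deriv A r + 2 * A r * (deriv w r) ^ 2
        = 1 - A r - (1 - (w r) ^ 2) ^ 2 / r ^ 2 - Λ * r ^ 2)
    (hE2 : ∀ r : ℝ, r_h < r →
      r ^ 2 * A r * deriv (deriv w) r
        + r * (1 - A r - (1 - (w r) ^ 2) ^ 2 / r ^ 2 - Λ * r ^ 2) * deriv w r
        + w r * (1 - (w r) ^ 2) = 0)
    (hArh : A r_h = 0)
    (hAneg : ∀ r : ℝ, r_h < r → A r < 0)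
    (hwrh : (1 - (w r_h) ^ 2) ^ 2 < 1)
    (hCpos : ∀ r : ℝ, r_h < r → 0 < C r)
    (hCdiff : ∀ r : ℝ, r_h < r → DifferentiableAt ℝ C r)
    (hE3 : ∀ r : ℝ, r_h < r → r * deriv C r = 2 * (deriv w r) ^ 2 * C r) :
    ∃ L : ℝ, Filter.Tendsto C Filter.atTop (nhds L) := by
  have hs2 : (0:ℝ) < Real.sqrt 2 := Real.sqrt_pos.mpr (by norm_num)
  have hrh0 : 0 < r_h := lt_trans hs2 hrh
  have hrh2 : 2 < r_h ^ 2 := by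
    nlinarith [Real.sq_sqrt (by norm_num : (0:ℝ) ≤ 2), Real.sqrt_nonneg 2]
  have hwd : ∀ x, r_h ≤ x → DifferentiableAt ℝ w x :=
    fun x hx => (hw x hx).differentiableAt (by norm_num)
  have hw1d : ∀ x, r_h ≤ x → DifferentiableAt ℝ (deriv w) x :=
    fun x hx => (aux_deriv2 (hw x hx)).1
  have hw1c : ∀ x, r_h ≤ x → ContinuousAt (deriv w) x :=
    fun x hx => (aux_deriv2 (hw x hx)).2
  have hAd : ∀ x, r_h ≤ x → DifferentiableAt ℝ A x :=
    fun x hx => (hA x hx).differentiableAt (by norm_num)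
  have hx2 : ∀ x, r_h < x → 2 < x ^ 2 := by
    intro x hx; nlinarith
  have hφcont : ∀ x, r_h ≤ x → ContinuousAt (phiEYM Λ A) x := by
    intro x hx
    have h1 : ContinuousAt (fun r : ℝ => (Λ * r ^ 3 - r) / 3) x := by fun_prop
    exact ((continuousAt_id.mul (hAd x hx).continuousAt).neg).sub h1
  have hQcont : ∀ x, r_h ≤ x → ContinuousAt (QEYM A w) x := by
    intro x hx
    have h1 : ContinuousAt (fun r : ℝ => r ^ 2) x := by fun_prop
    have h2 : ContinuousAt (fun r : ℝ => (1 - (w r) ^ 2) ^ 2 / 2) x := by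
      have := (hwd x hx).continuousAt
      fun_prop
    exact (((h1.mul (hAd x hx).continuousAt).mul ((hw1c x hx).pow 2)).neg).add h2
  -- the key invariant
  have key : ∀ x, r_h < x → phiEYM Λ A x < 0 ∧ QEYM A w x < 1 / 2 := by
    intro z hz
    by_contra hbad
    have hφrh : phiEYM Λ A r_h < 0 := by
      simp only [phiEYM, hArh]
      nlinarith
    have hQrh : QEYM A w r_h < 1 / 2 := by
      simp only [QEYM, hArh]
      nlinarith
    have hev1 : ∀ᶠ y in nhds r_h, phiEYM Λ A y < 0 :=
      (hφcont r_h le_rfl) (Iio_mem_nhds hφrh)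
    have hev2 : ∀ᶠ y in nhds r_h, QEYM A w y < 1 / 2 :=
      (hQcont r_h le_rfl) (Iio_mem_nhds hQrh)
    obtain ⟨ε, hε0, hball⟩ := Metric.eventually_nhds_iff.mp (hev1.and hev2)
    set δ : ℝ := min (ε / 2) ((z - r_h) / 2) with hδdef
    have hδ0 : 0 < δ := lt_min (half_pos hε0) (half_pos (sub_pos.mpr hz))
    have hδε : δ < ε := lt_of_le_of_lt (min_le_left _ _) (half_lt_self hε0)
    have hδz : r_h + δ ≤ z := by
      have h := min_le_right (ε / 2) ((z - r_h) / 2)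
      have : δ ≤ (z - r_h) / 2 := h
      linarith
    have hgood0 : ∀ y, r_h < y → y ≤ r_h + δ →
        phiEYM Λ A y < 0 ∧ QEYM A w y < 1 / 2 := by
      intro y h1 h2
      refine hball ?_
      rw [Real.dist_eq, abs_of_pos (by linarith)]
      linarith
    set S : Set ℝ := {y ∈ Icc (r_h + δ) z | 0 ≤ phiEYM Λ A y ∨ 1 / 2 ≤ QEYM A w y}
      with hSdef
    have hzS : z ∈ S := by
      refine ⟨⟨hδz, le_rfl⟩, ?_⟩
      rcases not_and_or.mp hbad with h | h
      · exact Or.inl (not_lt.mp h)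
      · exact Or.inr (not_lt.mp h)
    have hφon : ContinuousOn (phiEYM Λ A) (Icc (r_h + δ) z) := by
      intro y hy
      exact (hφcont y (by linarith [hy.1])).continuousWithinAt
    have hQon : ContinuousOn (QEYM A w) (Icc (r_h + δ) z) := by
      intro y hy
      exact (hQcont y (by linarith [hy.1])).continuousWithinAt
    have hScl : IsClosed S := by
      have hrw : S = (Icc (r_h + δ) z ∩ (phiEYM Λ A) ⁻¹' (Ici 0))
          ∪ (Icc (r_h + δ) z ∩ (QEYM A w) ⁻¹' (Ici (1 / 2))) := by
        ext y
        simp only [hSdef, mem_sep_iff, mem_union, mem_inter_iff, mem_preimage, mem_Ici]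
        tauto
      rw [hrw]
      exact (hφon.preimage_isClosed_of_isClosed isClosed_Icc isClosed_Ici).union
        (hQon.preimage_isClosed_of_isClosed isClosed_Icc isClosed_Ici)
    have hScpt : IsCompact S :=
      isCompact_Icc.of_isClosed_subset hScl (sep_subset _ _)
    have hmS : sInf S ∈ S := hScpt.sInf_mem ⟨z, hzS⟩
    set m : ℝ := sInf S with hmdef
    have hmlb : r_h + δ ≤ m := hmS.1.1
    have hmz : m ≤ z := hmS.1.2
    have hmrh : r_h < m := by linarith
    have hgood : ∀ y, r_h < y → y < m → phiEYM Λ A y < 0 ∧ QEYM A w y < 1 / 2 := by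
      intro y hy1 hy2
      by_cases hc : y ≤ r_h + δ
      · exact hgood0 y hy1 hc
      · push_neg at hc
        by_contra hb
        have hyS : y ∈ S := by
          refine ⟨⟨hc.le, by linarith⟩, ?_⟩
          rcases not_and_or.mp hb with h | h
          · exact Or.inl (not_lt.mp h)
          · exact Or.inr (not_lt.mp h)
        have : m ≤ y := csInf_le ⟨r_h + δ, fun t ht => ht.1.1⟩ hyS
        linarith
    -- φ is strictly decreasing on [r_h, m]
    have hφanti : StrictAntiOn (phiEYM Λ A) (Icc r_h m) := by
      apply strictAntiOn_of_deriv_neg (convex_Icc _ _)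
      · intro y hy; exact (hφcont y hy.1).continuousWithinAt
      · intro y hy
        rw [interior_Icc] at hy
        have hy1 : r_h < y := hy.1
        have hQy := (hgood y hy1 hy.2).2
        have hDer := phi_hasDeriv (w := w) (hAd y hy1.le) (hE1 y hy1)
        rw [hDer.deriv]
        have hy0 : 0 < y := lt_trans hrh0 hy1
        have hAy := hAneg y hy1
        have hwb : (1 - (w y) ^ 2) ^ 2 < 1 := by
          simp only [QEYM] at hQy
          nlinarith [mul_nonneg (mul_nonneg (sq_nonneg y) (by linarith : (0:ℝ) ≤ -A y))
            (sq_nonneg (deriv w y))]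
        have hy2' : 2 < y ^ 2 := hx2 y hy1
        have hs : (1 - (w y) ^ 2) ^ 2 / y ^ 2 < 1 / 2 := by
          rw [div_lt_iff₀ (by positivity)]
          nlinarith
        have h2a : 2 * A y * (deriv w y) ^ 2 ≤ 0 := by
          nlinarith [sq_nonneg (deriv w y)]
        linarith
    have hφm : phiEYM Λ A m < 0 := by
      have := hφanti (left_mem_Icc.mpr hmrh.le) (right_mem_Icc.mpr hmrh.le) hmrh
      linarith
    -- Q is non-increasing on [r_h, m]
    have hQanti : AntitoneOn (QEYM A w) (Icc r_h m) := by
      apply antitoneOn_of_deriv_nonpos (convex_Icc _ _)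
      · intro y hy; exact (hQcont y hy.1).continuousWithinAt
      · intro y hy
        rw [interior_Icc] at hy
        exact (Q_hasDeriv (Λ := Λ) (hAd y hy.1.le) (hwd y hy.1.le) (hw1d y hy.1.le)
          (hE1 y hy.1) (hE2 y hy.1)).differentiableAt.differentiableWithinAt
      · intro y hy
        rw [interior_Icc] at hy
        have hy1 : r_h < y := hy.1
        have hφy := (hgood y hy1 hy.2).1
        have hDer := Q_hasDeriv (Λ := Λ) (hAd y hy1.le) (hwd y hy1.le) (hw1d y hy1.le)
          (hE1 y hy1) (hE2 y hy1)
        rw [hDer.deriv]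
        have hy0 : 0 < y := lt_trans hrh0 hy1
        have hAy := hAneg y hy1
        have h1 : 3 * phiEYM Λ A y * (deriv w y) ^ 2 ≤ 0 := by
          nlinarith [sq_nonneg (deriv w y)]
        have h2 : 0 ≤ (1 - (w y) ^ 2) ^ 2 / y ^ 2 * (y * (deriv w y) ^ 2) := by positivity
        have hv4 : (0:ℝ) ≤ (deriv w y) ^ 4 := by positivity
        have h3 : 2 * y * A y * (deriv w y) ^ 4 ≤ 0 := by
          nlinarith [mul_nonneg (mul_nonneg hy0.le (by linarith : (0:ℝ) ≤ -A y)) hv4]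
        nlinarith
    have hQm : QEYM A w m < 1 / 2 := by
      have := hQanti (left_mem_Icc.mpr hmrh.le) (right_mem_Icc.mpr hmrh.le) hmrh.le
      linarith
    rcases hmS.2 with h | h
    · linarith
    · linarith
  -- consequences of the invariant
  have hQb : ∀ x, r_h < x → x ^ 2 * (-A x) * (deriv w x) ^ 2 < 1 / 2 := by
    intro x hx
    have h := (key x hx).2
    simp only [QEYM] at h
    nlinarith [sq_nonneg (1 - (w x) ^ 2)]
  -- η is strictly increasing on [r_h+1, ∞)
  have hηmono : StrictMonoOn (etaEYM Λ A) (Ici (r_h + 1)) := by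
    apply strictMonoOn_of_deriv_pos (convex_Ici _)
    · intro y hy
      have hy1 : r_h ≤ y := by have := mem_Ici.mp hy; linarith
      have h1 : ContinuousAt (fun r : ℝ => Λ * r ^ 3 / 3 - 3 / 2 * r) y := by fun_prop
      exact (((continuousAt_id.mul (hAd y hy1).continuousAt).neg).sub h1).continuousWithinAt
    · intro y hy
      rw [interior_Ici] at hy
      have hy1 : r_h < y := by have := mem_Ioi.mp hy; linarith
      have hDer := eta_hasDeriv (w := w) (hAd y hy1.le) (hE1 y hy1)
      rw [hDer.deriv]
      have hy0 : 0 < y := lt_trans hrh0 hy1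
      have hAy := hAneg y hy1
      have hy2' : 2 < y ^ 2 := hx2 y hy1
      have hq := hQb y hy1
      have hs0 : 0 ≤ (1 - (w y) ^ 2) ^ 2 / y ^ 2 := by positivity
      have ht : 0 ≤ 2 * (-A y) * (deriv w y) ^ 2 := by
        nlinarith [sq_nonneg (deriv w y)]
      have hfin : 2 * (-A y) * (deriv w y) ^ 2 < 1 / 2 := by
        nlinarith
      linarith
  -- lower bound for -A
  obtain ⟨r₂, hr₂def⟩ : ∃ t : ℝ, t = 2 * (r_h + 1) + Real.sqrt (18 / Λ) := ⟨_, rfl⟩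
  have hsq0 : 0 ≤ Real.sqrt (18 / Λ) := Real.sqrt_nonneg _
  have hr21 : r_h + 1 < r₂ := by
    rw [hr₂def]; linarith
  have hr2rh : r_h < r₂ := by linarith
  have hAlow : ∀ x, r₂ ≤ x → Λ * x ^ 2 / 6 ≤ -A x := by
    intro x hx
    have hx1 : r_h + 1 < x := lt_of_lt_of_le hr21 hx
    have hxrh : r_h < x := by linarith
    have hx0 : 0 < x := lt_trans hrh0 hxrh
    have hr10 : 0 < r_h + 1 := by linarith
    have hmono := hηmono (self_mem_Ici) (mem_Ici.mpr hx1.le) hx1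
    simp only [etaEYM] at hmono
    have hA1 : A (r_h + 1) < 0 := hAneg _ (by linarith)
    have hxs : Real.sqrt (18 / Λ) ≤ x := by
      have : Real.sqrt (18 / Λ) ≤ r₂ := by rw [hr₂def]; linarith
      linarith
    have hx18 : 18 / Λ ≤ x ^ 2 := by
      nlinarith [Real.sq_sqrt (le_of_lt (div_pos (by norm_num : (0:ℝ) < 18) hΛ)), hsq0]
    have hΛx : 18 ≤ Λ * x ^ 2 := by
      rw [div_le_iff₀ hΛ] at hx18; linarith
    have hcube : (2 * (r_h + 1)) ^ 3 ≤ x ^ 3 := by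
      have h2r : 2 * (r_h + 1) ≤ x := by
        have : 2 * (r_h + 1) ≤ r₂ := by rw [hr₂def]; linarith
        linarith
      exact pow_le_pow_left₀ (by linarith) h2r 3
    have h18x : 18 * x ≤ Λ * x ^ 2 * x :=
      mul_le_mul_of_nonneg_right hΛx hx0.le
    have hposA1 : 0 < (r_h + 1) * (-A (r_h + 1)) :=
      mul_pos hr10 (by linarith)
    have hxA : Λ * x ^ 3 / 6 ≤ -(x * A x) := by
      nlinarith [mul_pos hΛ (pow_pos hr10 3)]
    nlinarith
  -- bound on w'
  have hw2b : ∀ x, r₂ ≤ x → (deriv w x) ^ 2 * (Λ * x ^ 4) ≤ 3 := by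
    intro x hx
    have hxrh : r_h < x := lt_of_lt_of_le hr2rh hx
    have hx0 : 0 < x := lt_trans hrh0 hxrh
    have h1 := hQb x hxrh
    have h2 := hAlow x hx
    have h3 := mul_le_mul_of_nonneg_right h2
      (by positivity : (0:ℝ) ≤ x ^ 2 * (deriv w x) ^ 2)
    nlinarith
  -- C basics
  have hr20 : 0 < r₂ := by linarith
  have hCcont : ContinuousOn C (Ici r₂) :=
    fun y hy => ((hCdiff y (lt_of_lt_of_le hr2rh hy)).continuousAt).continuousWithinAt
  have hCderiv : ∀ y, r_h < y → deriv C y = 2 * (deriv w y) ^ 2 * C y / y := by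
    intro y hy
    have hy0 : (0:ℝ) < y := lt_trans hrh0 hy
    have h := hE3 y hy
    rw [eq_div_iff (ne_of_gt hy0)]
    linarith
  have hCmono : MonotoneOn C (Ici r₂) := by
    apply monotoneOn_of_deriv_nonneg (convex_Ici _) hCcont
    · intro y hy
      rw [interior_Ici] at hy
      exact (hCdiff y (lt_trans hr2rh hy)).differentiableWithinAt
    · intro y hy
      rw [interior_Ici] at hy
      have hyrh : r_h < y := lt_trans hr2rh hy
      have hy0 : 0 < y := lt_trans hrh0 hyrh
      rw [hCderiv y hyrh]
      have := hCpos y hyrh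
      positivity
  -- the auxiliary decreasing function G
  have hGD : ∀ y, r₂ < y → HasDerivAt (fun r => C r * Real.exp (3 / (2 * Λ) * (r ^ 4)⁻¹))
      (deriv C y * Real.exp (3 / (2 * Λ) * (y ^ 4)⁻¹)
        + C y * (Real.exp (3 / (2 * Λ) * (y ^ 4)⁻¹)
            * (3 / (2 * Λ) * (-(↑(4:ℕ) * y ^ (4 - 1)) / (y ^ 4) ^ 2)))) y := by
    intro y hy
    have hy0 : (0:ℝ) < y := lt_trans hr20 hy
    have hy4 : y ^ 4 ≠ 0 := pow_ne_zero 4 (ne_of_gt hy0)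
    exact (hCdiff y (lt_trans hr2rh hy)).hasDerivAt.mul
      ((((hasDerivAt_pow 4 y).inv hy4).const_mul (3 / (2 * Λ))).exp)
  have hGanti : AntitoneOn (fun r => C r * Real.exp (3 / (2 * Λ) * (r ^ 4)⁻¹)) (Ici r₂) := by
    apply antitoneOn_of_deriv_nonpos (convex_Ici _)
    · apply hCcont.mul
      intro y hy
      have hy0 : (0:ℝ) < y := lt_of_lt_of_le hr20 hy
      have : ContinuousAt (fun r : ℝ => Real.exp (3 / (2 * Λ) * (r ^ 4)⁻¹)) y := by
        apply Real.continuous_exp.continuousAt.comp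
        exact (continuousAt_const.mul ((continuousAt_id.pow 4).inv₀
          (pow_ne_zero 4 (ne_of_gt hy0))))
      exact this.continuousWithinAt
    · intro y hy
      rw [interior_Ici] at hy
      exact (hGD y hy).differentiableAt.differentiableWithinAt
    · intro y hy
      rw [interior_Ici] at hy
      rw [(hGD y hy).deriv]
      have hyrh : r_h < y := lt_trans hr2rh hy
      have hy0 : (0:ℝ) < y := lt_trans hr20 hy
      have hE : (0:ℝ) < Real.exp (3 / (2 * Λ) * (y ^ 4)⁻¹) := Real.exp_pos _
      have hCy : 0 < C y := hCpos y hyrh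
      rw [hCderiv y hyrh]
      have hk : 3 / (2 * Λ) * (-(↑(4:ℕ) * y ^ (4 - 1)) / (y ^ 4) ^ 2) = -(6 / (Λ * y ^ 5)) := by
        push_cast
        field_simp
        ring
      rw [hk]
      have hwb := hw2b y (le_of_lt hy)
      have h4 : 2 * (deriv w y) ^ 2 * C y / y ≤ 6 * C y / (Λ * y ^ 5) := by
        rw [div_le_div_iff₀ hy0 (by positivity)]
        nlinarith [mul_le_mul_of_nonneg_right hwb (by positivity : (0:ℝ) ≤ 2 * C y * y)]
      have h5 : 2 * (deriv w y) ^ 2 * C y / y + C y * -(6 / (Λ * y ^ 5)) ≤ 0 := by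
        have : C y * -(6 / (Λ * y ^ 5)) = -(6 * C y / (Λ * y ^ 5)) := by ring
        rw [this]; linarith
      nlinarith [h5, hE]
  -- boundedness of C
  set K : ℝ := C r₂ * Real.exp (3 / (2 * Λ) * (r₂ ^ 4)⁻¹) with hKdef
  have hCb : ∀ x, r₂ ≤ x → C x ≤ K := by
    intro x hx
    have h1 := hGanti (self_mem_Ici) (mem_Ici.mpr hx) hx
    simp only at h1
    have hCx : 0 < C x := hCpos x (lt_of_lt_of_le hr2rh hx)
    have h2 : C x ≤ C x * Real.exp (3 / (2 * Λ) * (x ^ 4)⁻¹) := by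
      apply le_mul_of_one_le_right hCx.le
      apply Real.one_le_exp
      have hx0 : (0:ℝ) < x := lt_of_lt_of_le hr20 hx
      positivity
    exact le_trans h2 h1
  -- conclude convergence
  set f : ℝ → ℝ := fun x => C (max x r₂) with hfdef
  have hfm : Monotone f := by
    intro a b hab
    exact hCmono (mem_Ici.mpr (le_max_right _ _)) (mem_Ici.mpr (le_max_right _ _))
      (max_le_max hab le_rfl)
  have hfb : BddAbove (Set.range f) := by
    refine ⟨K, ?_⟩
    rintro t ⟨a, rfl⟩
    exact hCb _ (le_max_right _ _)
  refine ⟨⨆ x, f x, ?_⟩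
  have htend := tendsto_atTop_ciSup hfm hfb
  have heq : f =ᶠ[atTop] C := by
    filter_upwards [Filter.eventually_ge_atTop r₂] with x hx
    simp only [hfdef, max_eq_left hx]
  exact htend.congr' heq
end
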